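/- arXiv:math/0701745 — 9 statements merged into one kernel-verified Lean document; each statement's English description precedes it below -/
import Mathlib

section
/- Let X be a closed, connected subset of ℝⁿ that is locally convex, i.e. for every x ∈ X there exists δ > 0 such that B(x,δ) ∩ X is convex (where B(x,δ) is the open Euclidean ball of radius δ centered at x). Then X is convex. -/
open Set Metric

/-- A path `c : ℝ → ℝⁿ`, considered on `[0,1]`, is *monotone straight* if either it is
constant, or its image is the segment `[c 0, c 1]` and it parametrizes this segment
weakly monotonically. -/
def MonotoneStraight {n : ℕ} (c : ℝ → EuclideanSpace ℝ (Fin n)) : Prop :=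
  (∀ t ∈ Set.Icc (0:ℝ) 1, c t = c 0) ∨
  ((c '' Set.Icc (0:ℝ) 1 = segment ℝ (c 0) (c 1)) ∧
   ∀ t₁ t₂ t₃ : ℝ, 0 ≤ t₁ → t₁ < t₂ → t₂ < t₃ → t₃ ≤ 1 →
     c t₂ ∈ segment ℝ (c t₁) (c t₃))

/-- The restriction of `Ψ` to `U` is a *convex map*: any two points of `U` are joined by a
continuous path in `U` whose composition with `Ψ` is monotone straight. -/
def IsConvexMapOn {n : ℕ} {X : Type*} [TopologicalSpace X]
    (Ψ : X → EuclideanSpace ℝ (Fin n)) (U : Set X) : Prop :=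
  ∀ x₀ ∈ U, ∀ x₁ ∈ U, ∃ γ : ℝ → X,
    ContinuousOn γ (Set.Icc 0 1) ∧ (∀ t ∈ Set.Icc (0:ℝ) 1, γ t ∈ U) ∧
    γ 0 = x₀ ∧ γ 1 = x₁ ∧ MonotoneStraight (Ψ ∘ γ)

/-- The restriction `Ψ|_U : U → Ψ(U)` is an open map onto its image: the image of every
relatively open subset of `U` is relatively open in `Ψ(U)`. -/
def IsOpenOnto {n : ℕ} {X : Type*} [TopologicalSpace X]
    (Ψ : X → EuclideanSpace ℝ (Fin n)) (U : Set X) : Prop :=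
  ∀ O : Set X, IsOpen O → ∃ V : Set (EuclideanSpace ℝ (Fin n)),
    IsOpen V ∧ Ψ '' (O ∩ U) = V ∩ Ψ '' U

/-- The `Ψ`-distance: the infimum of the lengths (total variations) of `Ψ ∘ γ` over all
continuous paths `γ` in `X` from `x₀` to `x₁`; takes values in `[0,∞]`. -/
noncomputable def psiDist {n : ℕ} {X : Type*} [TopologicalSpace X]
    (Ψ : X → EuclideanSpace ℝ (Fin n)) (x₀ x₁ : X) : ENNReal :=
  ⨅ γ ∈ {γ : ℝ → X | ContinuousOn γ (Set.Icc 0 1) ∧ γ 0 = x₀ ∧ γ 1 = x₁},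
    eVariationOn (Ψ ∘ γ) (Set.Icc 0 1)


open Set Metric Finset

namespace TNaux

variable {n : ℕ}

/-- A polygonal chain in `X` from `x` to `y` of total length at most `L`. -/
def Poly (X : Set (EuclideanSpace ℝ (Fin n))) (x y : EuclideanSpace ℝ (Fin n)) (L : ℝ) : Prop :=
  ∃ (m : ℕ) (p : ℕ → EuclideanSpace ℝ (Fin n)), p 0 = x ∧ p m = y ∧
    (∀ i < m, segment ℝ (p i) (p (i+1)) ⊆ X) ∧ x ∈ X ∧
    (∑ i ∈ Finset.range m, dist (p i) (p (i+1))) ≤ L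

variable {X : Set (EuclideanSpace ℝ (Fin n))} {x y z : EuclideanSpace ℝ (Fin n)} {L L' : ℝ}

lemma Poly.refl (hx : x ∈ X) : Poly X x x 0 :=
  ⟨0, fun _ => x, rfl, rfl, by simp, hx, by simp⟩

lemma Poly.mono (h : Poly X x y L) (hL : L ≤ L') : Poly X x y L' := by
  obtain ⟨m, p, h0, hm, hseg, hx, hsum⟩ := h
  exact ⟨m, p, h0, hm, hseg, hx, hsum.trans hL⟩

lemma Poly.dist_le (h : Poly X x y L) : dist x y ≤ L := by
  obtain ⟨m, p, h0, hm, hseg, hx, hsum⟩ := h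
  calc dist x y = dist (p 0) (p m) := by rw [h0, hm]
    _ ≤ ∑ i ∈ Finset.range m, dist (p i) (p (i+1)) := dist_le_range_sum_dist p m
    _ ≤ L := hsum

lemma Poly.nonneg (h : Poly X x y L) : 0 ≤ L := dist_nonneg.trans h.dist_le

lemma Poly.left_mem (h : Poly X x y L) : x ∈ X := by
  obtain ⟨m, p, h0, hm, hseg, hx, hsum⟩ := h; exact hx

lemma Poly.right_mem (h : Poly X x y L) : y ∈ X := by
  obtain ⟨m, p, h0, hm, hseg, hx, hsum⟩ := h
  cases m with
  | zero => rw [← hm, h0]; exact hx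
  | succ k =>
      rw [← hm]
      exact hseg k (Nat.lt_succ_self k) (right_mem_segment ℝ (p k) (p (k+1)))

lemma Poly.ofSegment (hx : x ∈ X) (h : segment ℝ x y ⊆ X) : Poly X x y (dist x y) := by
  refine ⟨1, fun i => if i = 0 then x else y, by simp, by simp, ?_, hx, by simp⟩
  intro i hi
  interval_cases i
  simpa using h

lemma Poly.symm (h : Poly X x y L) : Poly X y x L := by
  have hy : y ∈ X := h.right_mem
  obtain ⟨m, p, h0, hm, hseg, hx, hsum⟩ := h
  refine ⟨m, fun i => p (m - i), by simpa using hm, by simpa using h0, ?_, hy, ?_⟩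
  · intro i hi
    have e1 : m - (i+1) = m - 1 - i := by omega
    have e2 : m - i = (m - 1 - i) + 1 := by omega
    simp only []
    show segment ℝ (p (m - i)) (p (m - (i+1))) ⊆ X
    rw [e1, e2, segment_symm]
    exact hseg (m - 1 - i) (by omega)
  · have : ∀ i ∈ Finset.range m,
        dist (p (m - i)) (p (m - (i+1))) = dist (p (m - 1 - i)) (p ((m - 1 - i) + 1)) := by
      intro i hi
      rw [Finset.mem_range] at hi
      have e1 : m - (i+1) = m - 1 - i := by omega
      have e2 : m - i = (m - 1 - i) + 1 := by omega
      rw [e1, e2, dist_comm]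
    rw [Finset.sum_congr rfl this,
      Finset.sum_range_reflect (fun j => dist (p j) (p (j+1))) m]
    exact hsum

lemma Poly.trans (h1 : Poly X x y L) (h2 : Poly X y z L') : Poly X x z (L + L') := by
  obtain ⟨m, p, hp0, hpm, hpseg, hx, hps⟩ := h1
  obtain ⟨k, q, hq0, hqk, hqseg, hyX, hqs⟩ := h2
  set r : ℕ → EuclideanSpace ℝ (Fin n) := fun i => if i < m then p i else q (i - m) with hr
  have hrp : ∀ i ≤ m, r i = p i := by
    intro i hi
    rcases lt_or_eq_of_le hi with h | h
    · simp [hr, h]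
    · subst h; simp [hr, hq0, hpm]
  have hrq : ∀ i, r (m + i) = q i := by
    intro i
    rcases Nat.eq_zero_or_pos i with h | h
    · subst h; simpa using hrp m le_rfl |>.trans (hpm.trans hq0.symm)
    · have : ¬ (m + i < m) := by omega
      simp [hr, this]
  refine ⟨m + k, r, by simpa using hrp 0 (Nat.zero_le m) |>.trans hp0, by simpa using hrq k |>.trans hqk, ?_, hx, ?_⟩
  · intro i hi
    by_cases him : i < m
    · rw [hrp i him.le, hrp (i+1) him]
      exact hpseg i him
    · have h1 : i - m < k := by omega
      have e1 : r i = q (i - m) := by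
        have := hrq (i - m); rwa [show m + (i - m) = i by omega] at this
      have e2 : r (i+1) = q ((i - m) + 1) := by
        have := hrq (i - m + 1); rwa [show m + (i - m + 1) = i + 1 by omega] at this
      rw [e1, e2]
      exact hqseg (i - m) h1
  · rw [Finset.sum_range_add]
    have e1 : ∀ i ∈ Finset.range m, dist (r i) (r (i+1)) = dist (p i) (p (i+1)) := by
      intro i hi; rw [Finset.mem_range] at hi
      rw [hrp i hi.le, hrp (i+1) hi]
    have e2 : ∀ i ∈ Finset.range k, dist (r (m+i)) (r (m+i+1)) = dist (q i) (q (i+1)) := by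
      intro i hi
      rw [hrq i, show m + i + 1 = m + (i+1) by omega, hrq (i+1)]
    rw [Finset.sum_congr rfl e1, Finset.sum_congr rfl e2]
    exact add_le_add hps hqs

noncomputable def rho (X : Set (EuclideanSpace ℝ (Fin n)))
    (x y : EuclideanSpace ℝ (Fin n)) : ℝ := sInf {L | Poly X x y L}

lemma rho_nonneg : 0 ≤ rho X x y :=
  Real.sInf_nonneg fun _ hL => Poly.nonneg hL

lemma rho_le (h : Poly X x y L) : rho X x y ≤ L :=
  csInf_le ⟨0, fun _ hL => Poly.nonneg hL⟩ h

lemma dist_le_rho (h : ∃ L, Poly X x y L) : dist x y ≤ rho X x y :=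
  le_csInf h fun _ hL => Poly.dist_le hL

lemma poly_rho_add (h : ∃ L, Poly X x y L) {ε : ℝ} (hε : 0 < ε) :
    Poly X x y (rho X x y + ε) := by
  obtain ⟨a, ha, hlt⟩ := Real.lt_sInf_add_pos h hε
  exact Poly.mono ha hlt.le

lemma rho_triangle (h1 : ∃ L, Poly X x y L) (h2 : ∃ L, Poly X y z L) :
    rho X x z ≤ rho X x y + rho X y z := by
  refine le_of_forall_pos_le_add fun ε hε => ?_
  have hp := (poly_rho_add h1 (half_pos hε)).trans (poly_rho_add h2 (half_pos hε))
  have := rho_le hp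
  linarith

lemma rho_symm (h : ∃ L, Poly X x y L) : rho X x y = rho X y x := by
  have h' : ∃ L, Poly X y x L := ⟨_, h.choose_spec.symm⟩
  refine le_antisymm ?_ ?_
  · refine le_of_forall_pos_le_add fun ε hε => rho_le ((poly_rho_add h' hε).symm)
  · refine le_of_forall_pos_le_add fun ε hε => rho_le ((poly_rho_add h hε).symm)

/-- Connectivity: any two points of `X` are joined by a polygonal chain. -/
lemma exists_poly (hconn : IsConnected X)
    (hloc : ∀ x ∈ X, ∃ δ > (0:ℝ), Convex ℝ (Metric.ball x δ ∩ X)) :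
    ∀ a ∈ X, ∀ b ∈ X, ∃ L, Poly X a b L := by
  choose! f hf0 hfc using hloc
  intro a ha b hb
  by_contra hcon
  push_neg at hcon
  set Y : Set (EuclideanSpace ℝ (Fin n)) := {w | w ∈ X ∧ ∃ L, Poly X a w L} with hY
  have hbY : b ∉ Y := fun hmem => hcon hmem.2.choose hmem.2.choose_spec
  have hpre := hconn.isPreconnected
  have key := hpre (⋃ w ∈ Y, ball w (f w)) (⋃ w ∈ X \ Y, ball w (f w))
      (isOpen_biUnion fun _ _ => isOpen_ball) (isOpen_biUnion fun _ _ => isOpen_ball)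
      (fun w hw => by
        by_cases hwY : w ∈ Y
        · exact Or.inl (mem_biUnion hwY (mem_ball_self (hf0 w hw)))
        · exact Or.inr (mem_biUnion ⟨hw, hwY⟩ (mem_ball_self (hf0 w hw))))
      ⟨a, ha, mem_biUnion ⟨ha, 0, Poly.refl ha⟩ (mem_ball_self (hf0 a ha))⟩
      ⟨b, hb, mem_biUnion ⟨hb, hbY⟩ (mem_ball_self (hf0 b hb))⟩
  obtain ⟨c, hcX, hc1, hc2⟩ := key
  obtain ⟨w₁, hw₁, hcw₁⟩ := mem_iUnion₂.mp hc1
  obtain ⟨w₂, hw₂, hcw₂⟩ := mem_iUnion₂.mp hc2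
  -- c is reachable
  have hw₁X : w₁ ∈ X := hw₁.1
  have hseg1 : segment ℝ w₁ c ⊆ X := fun u hu =>
    ((hfc w₁ hw₁X).segment_subset ⟨mem_ball_self (hf0 w₁ hw₁X), hw₁X⟩ ⟨hcw₁, hcX⟩ hu).2
  have hcY : c ∈ Y := by
    obtain ⟨L, hL⟩ := hw₁.2
    exact ⟨hcX, L + dist w₁ c, hL.trans (Poly.ofSegment hw₁X hseg1)⟩
  -- but then w₂ is reachable, contradiction
  have hw₂X : w₂ ∈ X := hw₂.1
  have hseg2 : segment ℝ c w₂ ⊆ X := fun u hu =>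
    ((hfc w₂ hw₂X).segment_subset ⟨hcw₂, hcX⟩ ⟨mem_ball_self (hf0 w₂ hw₂X), hw₂X⟩ hu).2
  obtain ⟨L, hL⟩ := hcY.2
  exact hw₂.2 ⟨hw₂X, L + dist c w₂, hL.trans (Poly.ofSegment hcX hseg2)⟩

/-- Lebesgue-number style uniform local convexity on a compact subset. -/
lemma lebesgue (hloc : ∀ x ∈ X, ∃ δ > (0:ℝ), Convex ℝ (Metric.ball x δ ∩ X))
    {K : Set (EuclideanSpace ℝ (Fin n))} (hK : IsCompact K) (hKX : K ⊆ X) :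
    ∃ δ > (0:ℝ), ∀ z ∈ K, Convex ℝ (ball z δ ∩ X) := by
  choose! f hf0 hfc using hloc
  rcases K.eq_empty_or_nonempty with hKe | hKne
  · exact ⟨1, one_pos, by simp [hKe]⟩
  obtain ⟨t, htK, hcover⟩ := hK.elim_nhds_subcover (fun w => ball w (f w / 2))
    (fun w hw => ball_mem_nhds _ (by have := hf0 w (hKX hw); linarith))
  have htne : t.Nonempty := by
    rcases hKne with ⟨w, hw⟩
    obtain ⟨u, hu, _⟩ := mem_iUnion₂.mp (hcover hw)
    exact ⟨u, hu⟩
  refine ⟨t.inf' htne (fun w => f w / 2), ?_, ?_⟩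
  · rw [gt_iff_lt, Finset.lt_inf'_iff]
    intro w hw
    have := hf0 w (hKX (htK w hw)); linarith
  · intro z hz
    obtain ⟨w, hwt, hzw⟩ := mem_iUnion₂.mp (hcover hz)
    have hwX : w ∈ X := hKX (htK w hwt)
    have hδle : t.inf' htne (fun w => f w / 2) ≤ f w / 2 := Finset.inf'_le _ hwt
    have hsub : ball z (t.inf' htne (fun w => f w / 2)) ⊆ ball w (f w) := by
      intro u hu
      rw [mem_ball] at hu hzw ⊢
      calc dist u w ≤ dist u z + dist z w := dist_triangle u z w
        _ < f w / 2 + f w / 2 := add_lt_add (lt_of_lt_of_le hu hδle) hzw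
        _ = f w := by ring
    have : ball z (t.inf' htne (fun w => f w / 2)) ∩ X
        = ball z (t.inf' htne (fun w => f w / 2)) ∩ (ball w (f w) ∩ X) := by
      ext u
      constructor
      · rintro ⟨h1, h2⟩; exact ⟨h1, hsub h1, h2⟩
      · rintro ⟨h1, _, h3⟩; exact ⟨h1, h3⟩
    rw [this]
    exact (convex_ball z _).inter (hfc w hwX)
/-- Split a polygonal chain at arclength `c`. -/
lemma poly_split (h : Poly X x y L) {c : ℝ} (hc : 0 ≤ c) (hcL : c ≤ L) :
    ∃ z ∈ X, Poly X x z c ∧ Poly X z y (L - c) := by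
  classical
  obtain ⟨m, p, h0, hm, hseg, hx, hsum⟩ := h
  set S : ℕ → ℝ := fun i => ∑ j ∈ Finset.range i, dist (p j) (p (j+1)) with hS
  have hS0 : S 0 = 0 := by simp [hS]
  have hSm : S m ≤ L := hsum
  by_cases hcS : S m ≤ c
  · have hyX : y ∈ X := Poly.right_mem ⟨m, p, h0, hm, hseg, hx, hsum⟩
    exact ⟨y, hyX, ⟨m, p, h0, hm, hseg, hx, hcS⟩, (Poly.refl hyX).mono (by linarith)⟩
  push_neg at hcS
  set i := Nat.findGreatest (fun j => S j ≤ c) m with hi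
  have hSi : S i ≤ c :=
    Nat.findGreatest_spec (P := fun j => S j ≤ c) (Nat.zero_le m) (by simpa [hS0] using hc)
  have him : i ≤ m := Nat.findGreatest_le m
  have hilt : i < m := by
    rcases lt_or_eq_of_le him with h | h
    · exact h
    · exact absurd (h ▸ hSi) (not_le.mpr hcS)
  have hSi1 : c < S (i+1) := by
    by_contra hcon
    push_neg at hcon
    have := Nat.findGreatest_is_greatest (P := fun j => S j ≤ c) (n := m) (k := i+1)
      (by omega) (by omega)
    exact this hcon
  set e := dist (p i) (p (i+1)) with he
  have hSsucc : S (i+1) = S i + e := Finset.sum_range_succ _ i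
  have hepos : 0 < e := by
    by_contra hcon
    push_neg at hcon
    have : e = 0 := le_antisymm hcon dist_nonneg
    rw [hSsucc, this] at hSi1
    linarith
  have hene : e ≠ 0 := ne_of_gt hepos
  set t := (c - S i) / e with ht
  have hte : t * e = c - S i := by rw [ht]; field_simp
  have ht0 : 0 ≤ t := div_nonneg (by linarith) hepos.le
  have ht1 : t ≤ 1 := by
    rw [ht, div_le_one hepos]
    rw [hSsucc] at hSi1
    linarith
  set zz : EuclideanSpace ℝ (Fin n) := p i + t • (p (i+1) - p i) with hzz
  have hzseg : zz ∈ segment ℝ (p i) (p (i+1)) := by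
    refine ⟨1 - t, t, by linarith, ht0, by ring, ?_⟩
    rw [hzz]; module
  have hzX : zz ∈ X := hseg i hilt hzseg
  have hnrm : ‖p (i+1) - p i‖ = e := by rw [he, dist_eq_norm, norm_sub_rev]
  have hd1 : dist (p i) zz = c - S i := by
    rw [dist_eq_norm, hzz]
    have h1 : p i - (p i + t • (p (i+1) - p i)) = (-t) • (p (i+1) - p i) := by module
    rw [h1, norm_smul, norm_neg, Real.norm_of_nonneg ht0, hnrm]
    exact hte
  have hd2 : dist zz (p (i+1)) = S (i+1) - c := by
    rw [dist_eq_norm, hzz]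
    have h1 : p i + t • (p (i+1) - p i) - p (i+1) = (t - 1) • (p (i+1) - p i) := by module
    rw [h1, norm_smul, Real.norm_eq_abs, abs_of_nonpos (by linarith), hnrm]
    have h2 : -(t - 1) * e = e - t * e := by ring
    rw [hSsucc]
    rw [show -(t-1) * e = e - t * e from by ring] at *
    nlinarith [hte]
  refine ⟨zz, hzX, ?_, ?_⟩
  · -- prefix chain
    set q : ℕ → EuclideanSpace ℝ (Fin n) := fun j => if j ≤ i then p j else zz with hq
    have hq1 : ∀ j, j ≤ i → q j = p j := by
      intro j hj; simp only [hq]; rw [if_pos hj]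
    have hq2 : ∀ j, ¬ (j ≤ i) → q j = zz := by
      intro j hj; simp only [hq]; rw [if_neg hj]
    refine ⟨i+1, q, by rw [hq1 0 (Nat.zero_le i), h0], hq2 (i+1) (by omega), ?_, hx, ?_⟩
    · intro j hj
      by_cases hji : j < i
      · rw [hq1 j hji.le, hq1 (j+1) hji]
        exact hseg j (by omega)
      · have hjeq : j = i := by omega
        rw [hjeq, hq1 i le_rfl, hq2 (i+1) (by omega)]
        exact fun u hu => hseg i hilt
          ((convex_segment (p i) (p (i+1))).segment_subset (left_mem_segment ℝ _ _) hzseg hu)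
    · rw [Finset.sum_range_succ]
      have e0 : ∀ j ∈ Finset.range i, dist (q j) (q (j+1)) = dist (p j) (p (j+1)) := by
        intro j hj; rw [Finset.mem_range] at hj
        rw [hq1 j hj.le, hq1 (j+1) hj]
      rw [Finset.sum_congr rfl e0, hq1 i le_rfl, hq2 (i+1) (by omega), hd1]
      have hSieq : (∑ j ∈ Finset.range i, dist (p j) (p (j+1))) = S i := rfl
      rw [hSieq]
      linarith
  · -- suffix chain
    set q : ℕ → EuclideanSpace ℝ (Fin n) := fun j => if j = 0 then zz else p (i + j) with hq
    have hq0 : q 0 = zz := by simp [hq]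
    have hqs : ∀ j, j ≠ 0 → q j = p (i + j) := by
      intro j hj; simp only [hq]; rw [if_neg hj]
    refine ⟨m - i, q, hq0, ?_, ?_, hzX, ?_⟩
    · rw [hqs (m - i) (by omega), show i + (m - i) = m by omega, hm]
    · intro j hj
      by_cases hj0 : j = 0
      · subst hj0
        rw [hq0, hqs 1 one_ne_zero, show i + 1 = i + 1 from rfl]
        exact fun u hu => hseg i hilt
          ((convex_segment (p i) (p (i+1))).segment_subset hzseg (right_mem_segment ℝ _ _) hu)
      · rw [hqs j hj0, hqs (j+1) (by omega), show i + (j+1) = (i+j) + 1 from by omega]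
        exact hseg (i + j) (by omega)
    · have hmi : m - i = (m - i - 1) + 1 := by omega
      rw [hmi, Finset.sum_range_succ']
      have e0 : ∀ j ∈ Finset.range (m - i - 1),
          dist (q (j+1)) (q (j+1+1)) = dist (p (i+1+j)) (p (i+1+j+1)) := by
        intro j hj
        rw [hqs (j+1) (by omega), hqs (j+1+1) (by omega),
          show i + (j+1) = i+1+j from by omega, show i + (j+1+1) = i+1+j+1 from by omega]
      rw [Finset.sum_congr rfl e0, hq0, hqs 1 one_ne_zero,
        show i + 1 = i + 1 from rfl, hd2]
      have hsplit : S m = S (i+1) + ∑ j ∈ Finset.range (m - i - 1), dist (p (i+1+j)) (p (i+1+j+1)) := by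
        have h4 := Finset.sum_range_add (fun j => dist (p j) (p (j+1))) (i+1) (m-i-1)
        rw [show (i+1) + (m-i-1) = m by omega] at h4
        exact h4
      have h5 : (∑ j ∈ Finset.range (m - i - 1), dist (p (i+1+j)) (p (i+1+j+1)))
          = S m - S (i+1) := by linarith
      rw [h5]
      linarith
/-- Existence of intrinsic midpoints. -/
lemma exists_midpoint (hclosed : IsClosed X)
    (hloc : ∀ x ∈ X, ∃ δ > (0:ℝ), Convex ℝ (Metric.ball x δ ∩ X))
    (hpoly : ∀ a ∈ X, ∀ b ∈ X, ∃ L, Poly X a b L)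
    {u v : EuclideanSpace ℝ (Fin n)} (hu : u ∈ X) (hv : v ∈ X) :
    ∃ w ∈ X, rho X u w ≤ rho X u v / 2 ∧ rho X w v ≤ rho X u v / 2 := by
  set ρ := rho X u v with hρ
  have hρ0 : 0 ≤ ρ := rho_nonneg
  have hz : ∀ k : ℕ, ∃ z ∈ X,
      Poly X u z ((ρ + 1/(k+1))/2) ∧ Poly X z v ((ρ + 1/(k+1))/2) := by
    intro k
    have hk1 : (0:ℝ) < 1/((k:ℝ)+1) := by positivity
    have hpk : Poly X u v (ρ + 1/((k:ℝ)+1)) := poly_rho_add (hpoly u hu v hv) hk1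
    obtain ⟨z, hzX, h1, h2⟩ := poly_split hpk (c := (ρ + 1/((k:ℝ)+1))/2)
      (by positivity) (by linarith)
    refine ⟨z, hzX, h1, ?_⟩
    have : ρ + 1/((k:ℝ)+1) - (ρ + 1/((k:ℝ)+1))/2 = (ρ + 1/((k:ℝ)+1))/2 := by ring
    rwa [this] at h2
  choose z hzX hz1 hz2 using hz
  have hbound : ∀ k, z k ∈ X ∩ closedBall u (ρ + 1) := by
    intro k
    refine ⟨hzX k, ?_⟩
    have hd := (hz1 k).dist_le
    have h1k : 1/((k:ℝ)+1) ≤ 1 := by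
      rw [div_le_one (by positivity)]
      have : (0:ℝ) ≤ (k:ℝ) := Nat.cast_nonneg k
      linarith
    rw [mem_closedBall, dist_comm]
    linarith
  have hcpt : IsCompact (X ∩ closedBall u (ρ + 1)) :=
    (isCompact_closedBall u (ρ+1)).inter_left hclosed
  obtain ⟨w, hwK, φ, hφ, hlim⟩ := hcpt.tendsto_subseq hbound
  have hwX : w ∈ X := hwK.1
  obtain ⟨δ, hδ0, hδconv⟩ := hloc w hwX
  have key : ∀ k : ℕ, dist (z (φ k)) w < δ →
      rho X (z (φ k)) w ≤ dist (z (φ k)) w ∧ rho X w (z (φ k)) ≤ dist (z (φ k)) w := by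
    intro k hk
    have hzb : z (φ k) ∈ ball w δ ∩ X := ⟨by rwa [mem_ball], hzX _⟩
    have hwb : w ∈ ball w δ ∩ X := ⟨mem_ball_self hδ0, hwX⟩
    have hs1 : segment ℝ (z (φ k)) w ⊆ X := fun a ha =>
      (hδconv.segment_subset hzb hwb ha).2
    have hs2 : segment ℝ w (z (φ k)) ⊆ X := fun a ha =>
      (hδconv.segment_subset hwb hzb ha).2
    constructor
    · exact rho_le (Poly.ofSegment (hzX _) hs1)
    · have := rho_le (Poly.ofSegment hwX hs2)
      rwa [dist_comm w (z (φ k))] at this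
  have main : ∀ ε : ℝ, 0 < ε → rho X u w ≤ ρ/2 + ε ∧ rho X w v ≤ ρ/2 + ε := by
    intro ε hε
    obtain ⟨N₂, hN₂⟩ := exists_nat_one_div_lt (show (0:ℝ) < ε/2 from by linarith)
    have hev : ∀ᶠ k in Filter.atTop, dist (z (φ k)) w < min δ (ε/2) := by
      have := Metric.tendsto_atTop.mp hlim (min δ (ε/2)) (lt_min hδ0 (by linarith))
      obtain ⟨N, hN⟩ := this
      filter_upwards [Filter.eventually_ge_atTop N] with k hk
      have := hN k hk
      simpa [Function.comp] using this
    obtain ⟨k, hk1, hk2⟩ := (hev.and (Filter.eventually_ge_atTop N₂)).exists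
    have hφk : (N₂:ℝ) ≤ (φ k : ℝ) := by
      have h1 : k ≤ φ k := hφ.le_apply
      exact_mod_cast le_trans hk2 h1
    have hsm : 1/((φ k : ℝ)+1) < ε/2 := by
      refine lt_of_le_of_lt ?_ hN₂
      apply one_div_le_one_div_of_le (by positivity)
      linarith
    have hdzw : dist (z (φ k)) w < δ := lt_of_lt_of_le hk1 (min_le_left _ _)
    have hdze : dist (z (φ k)) w < ε/2 := lt_of_lt_of_le hk1 (min_le_right _ _)
    obtain ⟨hr1, hr2⟩ := key k hdzw
    have hexz : ∃ L, Poly X u (z (φ k)) L := ⟨_, hz1 (φ k)⟩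
    have hexzw : ∃ L, Poly X (z (φ k)) w L :=
      ⟨_, Poly.ofSegment (hzX _) (fun a ha => (hδconv.segment_subset
        ⟨by rwa [mem_ball], hzX _⟩ ⟨mem_ball_self hδ0, hwX⟩ ha).2)⟩
    have hexwz : ∃ L, Poly X w (z (φ k)) L := ⟨_, hexzw.choose_spec.symm⟩
    have hexzv : ∃ L, Poly X (z (φ k)) v L := ⟨_, hz2 (φ k)⟩
    constructor
    · have htr := rho_triangle hexz hexzw
      have h1 : rho X u (z (φ k)) ≤ (ρ + 1/((φ k : ℝ)+1))/2 := rho_le (hz1 (φ k))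
      calc rho X u w ≤ rho X u (z (φ k)) + rho X (z (φ k)) w := htr
        _ ≤ (ρ + 1/((φ k : ℝ)+1))/2 + dist (z (φ k)) w := add_le_add h1 hr1
        _ ≤ ρ/2 + ε := by linarith
    · have htr := rho_triangle hexwz hexzv
      have h1 : rho X (z (φ k)) v ≤ (ρ + 1/((φ k : ℝ)+1))/2 := rho_le (hz2 (φ k))
      calc rho X w v ≤ rho X w (z (φ k)) + rho X (z (φ k)) v := htr
        _ ≤ dist (z (φ k)) w + (ρ + 1/((φ k : ℝ)+1))/2 := add_le_add hr2 h1
        _ ≤ ρ/2 + ε := by linarith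
  refine ⟨w, hwX, ?_, ?_⟩
  · refine le_of_forall_pos_le_add fun ε hε => (main ε hε).1
  · refine le_of_forall_pos_le_add fun ε hε => (main ε hε).2
lemma midpoint_smul (a b : EuclideanSpace ℝ (Fin n)) :
    midpoint ℝ a b = (2:ℝ)⁻¹ • (a + b) := midpoint_eq_smul_add ℝ a b

/-- A point of a segment equidistant from the endpoints is the midpoint. -/
lemma eq_midpoint_of_mem_segment {u m w : EuclideanSpace ℝ (Fin n)}
    (h : w ∈ segment ℝ u m) (hd : dist u w = dist w m) : w = midpoint ℝ u m := by
  obtain ⟨a, b, ha, hb, hab, rfl⟩ := h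
  have hba : a = 1 - b := by linarith
  subst hba
  have h1 : dist u ((1-b) • u + b • m) = b * dist u m := by
    rw [dist_eq_norm, dist_eq_norm]
    have : u - ((1-b) • u + b • m) = b • (u - m) := by module
    rw [this, norm_smul, Real.norm_of_nonneg hb]
  have h2 : dist ((1-b) • u + b • m) m = (1-b) * dist u m := by
    rw [dist_eq_norm, dist_eq_norm]
    have : (1-b) • u + b • m - m = (1-b) • (u - m) := by module
    rw [this, norm_smul, Real.norm_of_nonneg ha]
  rw [h1, h2] at hd
  rw [midpoint_smul]
  rcases eq_or_ne (dist u m) 0 with hum | hum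
  · rw [dist_eq_norm] at hum
    have humm : u = m := by
      have := norm_eq_zero.mp hum
      have : u - m = 0 := this
      linear_combination (norm := module) this
    rw [humm]
    module
  · have hb2 : b = 1/2 := by
      have := mul_right_cancel₀ hum hd
      linarith
    rw [hb2]
    module

/-- A segment is covered by the two half-segments through the midpoint. -/
lemma segment_subset_union (u v : EuclideanSpace ℝ (Fin n)) :
    segment ℝ u v ⊆ segment ℝ u (midpoint ℝ u v) ∪ segment ℝ (midpoint ℝ u v) v := by
  rintro w ⟨a, b, ha, hb, hab, rfl⟩
  have hba : a = 1 - b := by linarith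
  subst hba
  by_cases hb2 : b ≤ 1/2
  · left
    refine ⟨1 - 2*b, 2*b, by linarith, by linarith, by ring, ?_⟩
    rw [midpoint_smul]
    module
  · right
    push_neg at hb2
    refine ⟨2 - 2*b, 2*b - 1, by linarith, by linarith, by ring, ?_⟩
    rw [midpoint_smul]
    module

end TNaux

/-- **Tietze–Nakajima.** A closed, connected, locally convex subset of ℝⁿ is convex. -/
theorem tietze_nakajima {n : ℕ} (X : Set (EuclideanSpace ℝ (Fin n)))
    (hclosed : IsClosed X) (hconn : IsConnected X)
    (hloc : ∀ x ∈ X, ∃ δ > (0:ℝ), Convex ℝ (Metric.ball x δ ∩ X)) :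
    Convex ℝ X := by
  classical
  open TNaux in
  rw [convex_iff_segment_subset]
  intro x hx y hy
  have hpoly : ∀ a ∈ X, ∀ b ∈ X, ∃ L, TNaux.Poly X a b L := TNaux.exists_poly hconn hloc
  set R : ℝ := TNaux.rho X x y + 1 with hR
  have hρ0 : 0 ≤ TNaux.rho X x y := TNaux.rho_nonneg
  have hRpos : 0 < R := by linarith
  have hKcpt : IsCompact (X ∩ closedBall x (2*R)) :=
    (isCompact_closedBall x (2*R)).inter_left hclosed
  obtain ⟨δ, hδ0, hδ⟩ := TNaux.lebesgue hloc hKcpt inter_subset_left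
  -- the doubling induction
  have key : ∀ k : ℕ, ∀ u v : EuclideanSpace ℝ (Fin n), u ∈ X → v ∈ X →
      dist x u + TNaux.rho X u v ≤ 2*R → TNaux.rho X u v ≤ (3/2)^k * (δ/2) →
      segment ℝ u v ⊆ X ∧ TNaux.rho X u v = dist u v := by
    intro k
    induction k with
    | zero =>
      intro u v hu hv hpos hr
      rw [pow_zero, one_mul] at hr
      have hρuv : 0 ≤ TNaux.rho X u v := TNaux.rho_nonneg
      have hduv : dist u v ≤ δ/2 := (TNaux.dist_le_rho (hpoly u hu v hv)).trans hr
      have huK : u ∈ X ∩ closedBall x (2*R) := by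
        refine ⟨hu, ?_⟩
        rw [mem_closedBall, dist_comm]
        linarith
      have hconv := hδ u huK
      have hsub : segment ℝ u v ⊆ X := by
        intro w hw
        refine (hconv.segment_subset ⟨mem_ball_self hδ0, hu⟩ ⟨?_, hv⟩ hw).2
        rw [mem_ball, dist_comm]
        linarith
      exact ⟨hsub, le_antisymm (TNaux.rho_le (TNaux.Poly.ofSegment hu hsub))
        (TNaux.dist_le_rho (hpoly u hu v hv))⟩
    | succ k ih =>
      intro u v hu hv hpos hr
      set r : ℝ := (3/2)^k * (δ/2) with hrdef
      have hrpos : 0 < r := by positivity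
      by_cases hcase : TNaux.rho X u v ≤ r
      · exact ih u v hu hv hpos hcase
      push_neg at hcase
      set ρ := TNaux.rho X u v with hρdef
      have hρpos : 0 < ρ := lt_trans hrpos hcase
      have hr32 : ρ ≤ 3/2 * r := by
        have : (3/2:ℝ)^(k+1) * (δ/2) = 3/2 * r := by rw [hrdef, pow_succ]; ring
        rw [this] at hr
        exact hr
      -- midpoints
      obtain ⟨m, hm, hm1, hm2⟩ := TNaux.exists_midpoint hclosed hloc hpoly hu hv
      have htri : ρ ≤ TNaux.rho X u m + TNaux.rho X m v :=
        TNaux.rho_triangle (hpoly u hu m hm) (hpoly m hm v hv)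
      have hρeq : ρ = TNaux.rho X u v := hρdef
      have hum : TNaux.rho X u m = ρ/2 := by linarith [hρeq.le, hρeq.ge, hm1, hm2, htri]
      have hmv : TNaux.rho X m v = ρ/2 := by linarith [hρeq.le, hρeq.ge, hm1, hm2, htri]
      obtain ⟨m', hm', hm'1, hm'2⟩ := TNaux.exists_midpoint hclosed hloc hpoly hu hm
      rw [hum] at hm'1 hm'2
      have htri' : TNaux.rho X u m ≤ TNaux.rho X u m' + TNaux.rho X m' m :=
        TNaux.rho_triangle (hpoly u hu m' hm') (hpoly m' hm' m hm)
      rw [hum] at htri'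
      have hum' : TNaux.rho X u m' = ρ/4 := by linarith
      have hm'm : TNaux.rho X m' m = ρ/4 := by linarith
      obtain ⟨m'', hm'', hm''1, hm''2⟩ := TNaux.exists_midpoint hclosed hloc hpoly hm hv
      rw [hmv] at hm''1 hm''2
      have htri'' : TNaux.rho X m v ≤ TNaux.rho X m m'' + TNaux.rho X m'' v :=
        TNaux.rho_triangle (hpoly m hm m'' hm'') (hpoly m'' hm'' v hv)
      rw [hmv] at htri''
      have hmm'' : TNaux.rho X m m'' = ρ/4 := by linarith
      have hm''v : TNaux.rho X m'' v = ρ/4 := by linarith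
      -- rho m' m'' = ρ/2
      have htA : TNaux.rho X m' m'' ≤ TNaux.rho X m' m + TNaux.rho X m m'' :=
        TNaux.rho_triangle (hpoly m' hm' m hm) (hpoly m hm m'' hm'')
      have htB : ρ ≤ TNaux.rho X u m' + TNaux.rho X m' v :=
        TNaux.rho_triangle (hpoly u hu m' hm') (hpoly m' hm' v hv)
      have htC : TNaux.rho X m' v ≤ TNaux.rho X m' m'' + TNaux.rho X m'' v :=
        TNaux.rho_triangle (hpoly m' hm' m'' hm'') (hpoly m'' hm'' v hv)
      have hm'm'' : TNaux.rho X m' m'' = ρ/2 := by linarith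
      -- distance bookkeeping from x
      have hdxu : dist x u + ρ ≤ 2*R := hpos
      have hd_um : dist x u + TNaux.rho X u m ≤ 2*R := by rw [hum]; linarith
      -- apply induction hypothesis to the pairs
      have hρ2r : ρ/2 ≤ r := by linarith
      have hρ4r : ρ/4 ≤ r := by linarith
      obtain ⟨segUM, hdum⟩ := ih u m hu hm hd_um (by rw [hum]; exact hρ2r)
      have hdum' : dist u m = ρ/2 := by rw [← hdum, hum]
      have htxum := dist_triangle x u m
      obtain ⟨segMV, hdmv⟩ := ih m v hm hv
        (by rw [hmv]; linarith) (by rw [hmv]; exact hρ2r)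
      have hdmv' : dist m v = ρ/2 := by rw [← hdmv, hmv]
      obtain ⟨_, hdum''⟩ := ih u m' hu hm'
        (by rw [hum']; linarith) (by rw [hum']; exact hρ4r)
      have hdum''' : dist u m' = ρ/4 := by rw [← hdum'', hum']
      have htxum' := dist_triangle x u m'
      obtain ⟨_, hdm'm⟩ := ih m' m hm' hm
        (by rw [hm'm]; linarith) (by rw [hm'm]; exact hρ4r)
      have hdm'm' : dist m' m = ρ/4 := by rw [← hdm'm, hm'm]
      obtain ⟨_, hdmm''⟩ := ih m m'' hm hm''
        (by rw [hmm'']; linarith) (by rw [hmm'']; exact hρ4r)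
      have hdmm''' : dist m m'' = ρ/4 := by rw [← hdmm'', hmm'']
      have htxmm'' := dist_triangle x m m''
      obtain ⟨_, hdm''v⟩ := ih m'' v hm'' hv
        (by rw [hm''v]; linarith) (by rw [hm''v]; exact hρ4r)
      obtain ⟨segM, hdm'm''⟩ := ih m' m'' hm' hm''
        (by rw [hm'm'']; linarith) (by rw [hm'm'']; exact hρ2r)
      have hdm'm''2 : dist m' m'' = ρ/2 := by rw [← hdm'm'', hm'm'']
      -- strict convexity: betweenness
      have hbtw : m ∈ segment ℝ m' m'' := by
        refine mem_segment_iff_wbtw.mpr (dist_add_dist_eq_iff.mp ?_)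
        rw [hdm'm', hdmm''', hdm'm''2]; ring
      have hsg1 : m' ∈ segment ℝ u m := by
        refine mem_segment_iff_wbtw.mpr (dist_add_dist_eq_iff.mp ?_)
        rw [hdum''', hdm'm', hdum']; ring
      have hsg2 : m'' ∈ segment ℝ m v := by
        refine mem_segment_iff_wbtw.mpr (dist_add_dist_eq_iff.mp ?_)
        rw [hdmm''', hdm''v.symm.trans hm''v, hdmv']; ring
      -- identify the midpoints
      have hmid1 : m' = midpoint ℝ u m :=
        TNaux.eq_midpoint_of_mem_segment hsg1 (by rw [hdum''', hdm'm'])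
      have hmid2 : m'' = midpoint ℝ m v :=
        TNaux.eq_midpoint_of_mem_segment hsg2 (by rw [hdmm''']; rw [hdm''v.symm.trans hm''v])
      have hmid3 : m = midpoint ℝ m' m'' := by
        refine TNaux.eq_midpoint_of_mem_segment hbtw ?_
        rw [hdm'm', hdmm''']
      have hmideq : m = midpoint ℝ u v := by
        rw [hmid1, hmid2] at hmid3
        rw [TNaux.midpoint_smul, TNaux.midpoint_smul, TNaux.midpoint_smul] at hmid3
        rw [TNaux.midpoint_smul]
        linear_combination (norm := module) (2:ℝ) • hmid3
      -- conclude
      have hduv : dist u v = ρ := by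
        have := dist_left_midpoint (𝕜 := ℝ) u v
        rw [← hmideq] at this
        rw [hdum'] at this
        have h2 : ‖(2:ℝ)‖ = 2 := by norm_num
        rw [h2] at this
        linarith
      refine ⟨?_, by rw [hduv]⟩
      intro w hw
      rcases TNaux.segment_subset_union u v hw with h | h
      · rw [← hmideq] at h; exact segUM h
      · rw [← hmideq] at h; exact segMV h
  -- choose the scale
  obtain ⟨k, hk⟩ := pow_unbounded_of_one_lt ((2*R)/(δ/2)) (show (1:ℝ) < 3/2 by norm_num)
  have hscale : 2*R ≤ (3/2)^k * (δ/2) := by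
    rw [div_lt_iff₀ (show (0:ℝ) < δ/2 by linarith)] at hk
    linarith
  have := key k x y hx hy (by rw [dist_self]; linarith) (by linarith)
  exact this.1
end

section
/- Let X be a closed, connected, locally convex subset of ℝⁿ, and let x₀, x₁ ∈ X. Then there exists a point x_{1/2} ∈ X such that d_X(x₀, x_{1/2}) = d_X(x_{1/2}, x₁) = (1/2)·d_X(x₀, x₁), where d_X denotes the intrinsic path-length distance in X. -/
open Set Metric

/-- The intrinsic (path-length) distance in a subset `X` of ℝⁿ: the infimum of lengths
(total variations) of continuous paths in `X` joining the two points; values in `[0,∞]`. -/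
noncomputable def intrinsicDist {n : ℕ} (X : Set (EuclideanSpace ℝ (Fin n)))
    (x₀ x₁ : EuclideanSpace ℝ (Fin n)) : ENNReal :=
  ⨅ γ ∈ {γ : ℝ → EuclideanSpace ℝ (Fin n) |
      ContinuousOn γ (Set.Icc 0 1) ∧ (∀ t ∈ Set.Icc (0:ℝ) 1, γ t ∈ X) ∧
      γ 0 = x₀ ∧ γ 1 = x₁},
    eVariationOn γ (Set.Icc 0 1)

/-!
On a path of length `V` from `x₀` to `x₁` there is a point at intrinsic distance at most `V / 2`
from both ends: local convexity makes the sublevel sets of `intrinsicDist X x₀` and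
`intrinsicDist X x₁` closed, they cover the connected image of the path, and each contains an
endpoint. Letting `V` decrease to `d_X(x₀, x₁)` gives a decreasing sequence of nonempty compact
sets of approximate midpoints, and a point in their intersection is a midpoint by the triangle
inequality. Connectedness and local convexity make `d_X(x₀, x₁)` finite.
-/

open Filter Topology
open scoped ENNReal

def IsLocallyConvex {E : Type*} [SeminormedAddCommGroup E] [NormedSpace ℝ E] (X : Set E) :
    Prop :=
  ∀ x ∈ X, ∃ δ > (0 : ℝ), Convex ℝ (ball x δ ∩ X)

theorem ENNReal.eq_half_of_le_half_of_le_add {a b c : ℝ≥0∞} (hc : c ≠ ⊤) (ha : a ≤ c / 2)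
    (hb : b ≤ c / 2) (hab : c ≤ a + b) : a = c / 2 :=
  le_antisymm ha <| ENNReal.le_of_add_le_add_right (ENNReal.div_ne_top hc two_ne_zero) <|
    calc c / 2 + c / 2 = c := ENNReal.add_halves c
      _ ≤ a + b := hab
      _ ≤ a + c / 2 := by gcongr

section

variable {n : ℕ} {X : Set (EuclideanSpace ℝ (Fin n))} {x y z : EuclideanSpace ℝ (Fin n)}

local notation "E" => EuclideanSpace ℝ (Fin n)

theorem intrinsicDist_le_eVariationOn {γ : ℝ → E} (hγ : ContinuousOn γ (Icc 0 1))
    (hγX : MapsTo γ (Icc 0 1) X) (h₀ : γ 0 = x) (h₁ : γ 1 = y) :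
    intrinsicDist X x y ≤ eVariationOn γ (Icc 0 1) :=
  iInf₂_le γ ⟨hγ, hγX, h₀, h₁⟩

theorem exists_eVariationOn_lt_of_intrinsicDist_lt {c : ℝ≥0∞} (h : intrinsicDist X x y < c) :
    ∃ γ : ℝ → E, ContinuousOn γ (Icc 0 1) ∧ MapsTo γ (Icc 0 1) X ∧ γ 0 = x ∧ γ 1 = y ∧
      eVariationOn γ (Icc 0 1) < c := by
  simp only [intrinsicDist, iInf_lt_iff] at h
  obtain ⟨γ, ⟨hγ, hγX, h₀, h₁⟩, hlt⟩ := h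
  exact ⟨γ, hγ, hγX, h₀, h₁, hlt⟩

theorem intrinsicDist_le_eVariationOn_Icc {γ : ℝ → E} {a b : ℝ} (hab : a ≤ b)
    (hγ : ContinuousOn γ (Icc a b)) (hγX : MapsTo γ (Icc a b) X) :
    intrinsicDist X (γ a) (γ b) ≤ eVariationOn γ (Icc a b) := by
  set φ : ℝ → ℝ := ⇑(AffineMap.lineMap (k := ℝ) a b)
  have hφ : φ '' Icc 0 1 = Icc a b := by
    rw [← segment_eq_image_lineMap ℝ a b, segment_eq_Icc hab]
  have hmaps : MapsTo φ (Icc 0 1) (Icc a b) := fun t ht => hφ.subset (mem_image_of_mem φ ht)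
  rw [← hφ, ← eVariationOn.comp_eq_of_monotoneOn γ φ ((AffineMap.lineMap_mono hab).monotoneOn _)]
  exact intrinsicDist_le_eVariationOn (hγ.comp (AffineMap.lineMap_continuous.continuousOn) hmaps)
    (hγX.comp hmaps) (by simp [φ]) (by simp [φ])

theorem intrinsicDist_self (hx : x ∈ X) : intrinsicDist X x x = 0 :=
  nonpos_iff_eq_zero.1 <| (intrinsicDist_le_eVariationOn_Icc (γ := fun _ => x) (le_refl (0 : ℝ))
    continuousOn_const (fun _ _ => hx)).trans_eq (by simp [eVariationOn.subsingleton])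

theorem edist_le_intrinsicDist : edist x y ≤ intrinsicDist X x y :=
  le_iInf₂ fun γ ⟨_, _, h₀, h₁⟩ => h₀ ▸ h₁ ▸
    eVariationOn.edist_le γ (left_mem_Icc.2 zero_le_one) (right_mem_Icc.2 zero_le_one)

theorem intrinsicDist_le_edist_of_segment_subset (h : segment ℝ x y ⊆ X) :
    intrinsicDist X x y ≤ edist x y := by
  have hL := lipschitzWith_lineMap (𝕜 := ℝ) x y
  have hmaps : MapsTo (AffineMap.lineMap x y) (Icc (0 : ℝ) 1) X :=
    (mapsTo_image _ _).mono_right ((segment_eq_image_lineMap ℝ x y).symm ▸ h)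
  calc intrinsicDist X x y ≤ eVariationOn (AffineMap.lineMap x y ∘ id) (Icc (0 : ℝ) 1) :=
        intrinsicDist_le_eVariationOn hL.continuous.continuousOn hmaps (by simp) (by simp)
    _ ≤ nndist x y * eVariationOn id (Icc (0 : ℝ) 1) :=
        hL.lipschitzOnWith.comp_eVariationOn_le (mapsTo_univ _ _)
    _ = edist x y := by rw [eVariationOn_id_Icc]; simp

theorem intrinsicDist_comm (x y : E) : intrinsicDist X x y = intrinsicDist X y x := by
  suffices ∀ x y : E, intrinsicDist X y x ≤ intrinsicDist X x y from
    le_antisymm (this y x) (this x y)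
  intro x y
  refine le_iInf₂ fun γ ⟨hγ, hγX, h₀, h₁⟩ => ?_
  set σ : ℝ → ℝ := fun t => 1 - t
  have hσ : σ '' Icc 0 1 = Icc 0 1 := by simp [σ, image_const_sub_Icc]
  have hmaps : MapsTo σ (Icc 0 1) (Icc 0 1) := fun t ht => hσ.subset (mem_image_of_mem σ ht)
  have hvar := eVariationOn.comp_eq_of_antitoneOn γ σ (t := Icc 0 1)
    (fun _ _ _ _ h => sub_le_sub_left h 1)
  rw [hσ] at hvar
  exact hvar ▸ intrinsicDist_le_eVariationOn (hγ.comp (by fun_prop) hmaps) (MapsTo.comp hγX hmaps)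
    (by simpa [σ]) (by simpa [σ])

theorem intrinsicDist_le_eVariationOn_add {α β : ℝ → E} (hα : ContinuousOn α (Icc 0 1))
    (hαX : MapsTo α (Icc 0 1) X) (hβ : ContinuousOn β (Icc 0 1)) (hβX : MapsTo β (Icc 0 1) X)
    (hαβ : α 1 = β 0) :
    intrinsicDist X (α 0) (β 1) ≤ eVariationOn α (Icc 0 1) + eVariationOn β (Icc 0 1) := by
  set c : ℝ → E := fun t => if t ≤ 1 then α t else β (t - 1)
  set τ : ℝ → ℝ := fun t => t - 1
  have hτ : τ '' Icc 1 2 = Icc 0 1 := by norm_num [τ, image_sub_const_Icc]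
  have hmaps : MapsTo τ (Icc 1 2) (Icc 0 1) := fun t ht => hτ.subset (mem_image_of_mem τ ht)
  have hleft : EqOn α c (Icc 0 1) := fun t ht => (if_pos ht.2).symm
  have hright : EqOn (β ∘ τ) c (Icc 1 2) := by
    intro t ht
    rcases ht.1.eq_or_lt with rfl | h
    · simp [c, τ, hαβ]
    · simp [c, τ, h.not_ge]
  have hc : ContinuousOn c (Icc 0 2) := by
    rw [← Icc_union_Icc_eq_Icc zero_le_one one_le_two]
    exact ((hα.congr hleft.symm).union_of_isClosed
      ((hβ.comp (by fun_prop) hmaps).congr hright.symm) isClosed_Icc isClosed_Icc)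
  have hcX : MapsTo c (Icc 0 2) X := by
    rw [← Icc_union_Icc_eq_Icc zero_le_one one_le_two]
    exact (hαX.congr hleft).union ((hβX.comp hmaps).congr hright)
  calc intrinsicDist X (α 0) (β 1) = intrinsicDist X (c 0) (c 2) := by norm_num [c]
    _ ≤ eVariationOn c (Icc 0 2) := intrinsicDist_le_eVariationOn_Icc zero_le_two hc hcX
    _ = eVariationOn c (Icc 0 1) + eVariationOn c (Icc 1 2) := by
        simpa using (eVariationOn.Icc_add_Icc c zero_le_one one_le_two (mem_univ _)).symm
    _ = eVariationOn α (Icc 0 1) + eVariationOn β (Icc 0 1) := by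
        rw [← eVariationOn.eq_of_eqOn hleft, ← eVariationOn.eq_of_eqOn hright,
          eVariationOn.comp_eq_of_monotoneOn β τ (fun _ _ _ _ h => sub_le_sub_right h 1), hτ]

theorem intrinsicDist_triangle :
    intrinsicDist X x z ≤ intrinsicDist X x y + intrinsicDist X y z := by
  refine ENNReal.le_iInf_add_iInf fun α β => ENNReal.le_iInf_add_iInf fun hα hβ => ?_
  obtain ⟨hα, hαX, rfl, hα₁⟩ := hα
  obtain ⟨hβ, hβX, hβ₀, rfl⟩ := hβ
  exact intrinsicDist_le_eVariationOn_add hα hαX hβ hβX (hα₁.trans hβ₀.symm)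

theorem IsLocallyConvex.eventually_intrinsicDist_le_edist (hX : IsLocallyConvex X) (hx : x ∈ X) :
    ∀ᶠ y in 𝓝[X] x, intrinsicDist X x y ≤ edist x y := by
  obtain ⟨δ, hδ, hconv⟩ := hX x hx
  filter_upwards [inter_mem_nhdsWithin X (ball_mem_nhds x hδ)] with y hy
  exact intrinsicDist_le_edist_of_segment_subset
    ((hconv.segment_subset ⟨mem_ball_self hδ, hx⟩ ⟨hy.2, hy.1⟩).trans inter_subset_right)

theorem IsLocallyConvex.intrinsicDist_ne_top (hX : IsLocallyConvex X) (hconn : IsPreconnected X)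
    (hx : x ∈ X) (hy : y ∈ X) : intrinsicDist X x y ≠ ⊤ := by
  refine hconn.induction₂ (fun x y => intrinsicDist X x y ≠ ⊤) (fun x hx => ?_)
    (fun x y z _ _ _ hxy hyz => ?_) (fun x y _ _ h => intrinsicDist_comm x y ▸ h) hx hy
  · filter_upwards [hX.eventually_intrinsicDist_le_edist hx] with y hy
    exact ne_top_of_le_ne_top (edist_ne_top x y) hy
  · exact ne_top_of_le_ne_top (ENNReal.add_ne_top.2 ⟨hxy, hyz⟩) intrinsicDist_triangle

theorem IsLocallyConvex.isClosed_setOf_intrinsicDist_le (hX : IsLocallyConvex X)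
    (hclosed : IsClosed X) (x : E) (c : ℝ≥0∞) :
    IsClosed {y | y ∈ X ∧ intrinsicDist X x y ≤ c} := by
  set S := {y | y ∈ X ∧ intrinsicDist X x y ≤ c}
  refine closure_subset_iff_isClosed.1 fun z hz => ?_
  have hzX : z ∈ X := hclosed.closure_subset (closure_mono (sep_subset _ _) hz)
  refine ⟨hzX, ENNReal.le_of_forall_pos_le_add fun ε hε _ => ?_⟩
  have : NeBot (𝓝[S] z) := mem_closure_iff_nhdsWithin_neBot.1 hz
  have hnear : ∀ᶠ y in 𝓝[S] z, intrinsicDist X z y ≤ edist z y :=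
    nhdsWithin_mono z (sep_subset _ _) (hX.eventually_intrinsicDist_le_edist hzX)
  have hsmall : ∀ᶠ y in 𝓝[S] z, edist y z < ε :=
    mem_nhdsWithin_of_mem_nhds (eball_mem_nhds z (ENNReal.coe_pos.2 hε))
  obtain ⟨y, hyS, hzy, hyz⟩ := (eventually_mem_nhdsWithin.and (hnear.and hsmall)).exists
  calc intrinsicDist X x z ≤ intrinsicDist X x y + intrinsicDist X y z := intrinsicDist_triangle
    _ ≤ c + ε := by
      rw [intrinsicDist_comm y]
      exact add_le_add hyS.2 (hzy.trans (edist_comm z y ▸ hyz.le))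

theorem IsLocallyConvex.exists_intrinsicDist_le_half_eVariationOn (hX : IsLocallyConvex X)
    (hclosed : IsClosed X) {γ : ℝ → E} {a b : ℝ} (hab : a ≤ b) (hγ : ContinuousOn γ (Icc a b))
    (hγX : MapsTo γ (Icc a b) X) :
    ∃ y ∈ X, intrinsicDist X (γ a) y ≤ eVariationOn γ (Icc a b) / 2 ∧
      intrinsicDist X (γ b) y ≤ eVariationOn γ (Icc a b) / 2 := by
  set V := eVariationOn γ (Icc a b)
  set A := {y | y ∈ X ∧ intrinsicDist X (γ a) y ≤ V / 2}
  set B := {y | y ∈ X ∧ intrinsicDist X (γ b) y ≤ V / 2}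
  have hcover : γ '' Icc a b ⊆ A ∪ B := by
    rintro _ ⟨t, ht, rfl⟩
    have hA := intrinsicDist_le_eVariationOn_Icc ht.1 (hγ.mono (Icc_subset_Icc_right ht.2))
      (hγX.mono_left (Icc_subset_Icc_right ht.2))
    have hB := intrinsicDist_le_eVariationOn_Icc ht.2 (hγ.mono (Icc_subset_Icc_left ht.1))
      (hγX.mono_left (Icc_subset_Icc_left ht.1))
    rw [intrinsicDist_comm] at hB
    have hsplit : eVariationOn γ (Icc a t) + eVariationOn γ (Icc t b) = V := by
      simpa using eVariationOn.Icc_add_Icc γ ht.1 ht.2 (mem_univ t)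
    by_contra! h
    simp only [mem_union, mem_ofPred_eq, hγX ht, true_and, not_or, not_le, A, B] at h
    have := ENNReal.add_lt_add (h.1.trans_le hA) (h.2.trans_le hB)
    rw [ENNReal.add_halves, hsplit] at this
    exact this.false
  have ha : a ∈ Icc a b := left_mem_Icc.2 hab
  have hb : b ∈ Icc a b := right_mem_Icc.2 hab
  obtain ⟨_, ⟨t, -, rfl⟩, ⟨hA, hA'⟩, -, hB'⟩ := isPreconnected_closed_iff.1
    (isPreconnected_Icc.image γ hγ) A B (hX.isClosed_setOf_intrinsicDist_le hclosed _ _)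
    (hX.isClosed_setOf_intrinsicDist_le hclosed _ _) hcover
    ⟨γ a, mem_image_of_mem γ ha, hγX ha, by simp [intrinsicDist_self (hγX ha)]⟩
    ⟨γ b, mem_image_of_mem γ hb, hγX hb, by simp [intrinsicDist_self (hγX hb)]⟩
  exact ⟨γ t, hA, hA', hB'⟩

theorem IsLocallyConvex.exists_intrinsicDist_le_half_of_lt (hX : IsLocallyConvex X)
    (hclosed : IsClosed X) {c : ℝ≥0∞} (h : intrinsicDist X x y < c) :
    ∃ z ∈ X, intrinsicDist X x z ≤ c / 2 ∧ intrinsicDist X y z ≤ c / 2 := by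
  obtain ⟨γ, hγ, hγX, rfl, rfl, hlt⟩ := exists_eVariationOn_lt_of_intrinsicDist_lt h
  obtain ⟨z, hz, h₀, h₁⟩ := hX.exists_intrinsicDist_le_half_eVariationOn hclosed zero_le_one hγ hγX
  exact ⟨z, hz, h₀.trans (ENNReal.div_le_div_right hlt.le 2),
    h₁.trans (ENNReal.div_le_div_right hlt.le 2)⟩

theorem IsLocallyConvex.exists_intrinsicDist_le_half (hX : IsLocallyConvex X)
    (hclosed : IsClosed X) (h : intrinsicDist X x y ≠ ⊤) :
    ∃ z ∈ X, intrinsicDist X x z ≤ intrinsicDist X x y / 2 ∧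
      intrinsicDist X y z ≤ intrinsicDist X x y / 2 := by
  set L := intrinsicDist X x y
  set r : ℕ → ℝ≥0∞ := fun k => (L + ((k : ℝ≥0∞) + 1)⁻¹) / 2
  set S : ℕ → Set E := fun k =>
    {z | z ∈ X ∧ intrinsicDist X x z ≤ r k} ∩ {z | z ∈ X ∧ intrinsicDist X y z ≤ r k}
  have hr : Antitone r := fun i j hij => by
    simp only [r]
    gcongr
  have hr_lim : Tendsto r atTop (𝓝 (L / 2)) := by
    have h := ENNReal.tendsto_inv_nat_nhds_zero.comp (tendsto_add_atTop_nat 1)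
    simpa using ENNReal.Tendsto.div_const ((tendsto_const_nhds (x := L)).add h) (Or.inr two_ne_zero)
  have hS_closed : ∀ k, IsClosed (S k) := fun k =>
    (hX.isClosed_setOf_intrinsicDist_le hclosed _ _).inter
      (hX.isClosed_setOf_intrinsicDist_le hclosed _ _)
  have hS_nonempty : ∀ k, (S k).Nonempty := fun k => by
    obtain ⟨z, hz, hx, hy⟩ := hX.exists_intrinsicDist_le_half_of_lt hclosed
      (ENNReal.lt_add_right h (ENNReal.inv_ne_zero.2 (by simp : (k : ℝ≥0∞) + 1 ≠ ⊤)))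
    exact ⟨z, ⟨hz, hx⟩, hz, hy⟩
  have hS_compact : IsCompact (S 0) := by
    refine isCompact_of_isClosed_isBounded (hS_closed 0)
      (isBounded_closedBall (x := x) (r := (r 0).toReal) |>.subset fun z hz => ?_)
    rw [mem_closedBall, dist_comm, dist_edist]
    exact ENNReal.toReal_mono (by simp [r, ENNReal.div_eq_top, h])
      (edist_le_intrinsicDist.trans hz.1.2)
  obtain ⟨z, hz⟩ := IsCompact.nonempty_iInter_of_sequence_nonempty_isCompact_isClosed S
    (fun k => inter_subset_inter (fun z hz => ⟨hz.1, hz.2.trans (hr k.le_succ)⟩)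
      (fun z hz => ⟨hz.1, hz.2.trans (hr k.le_succ)⟩)) hS_nonempty hS_compact hS_closed
  rw [mem_iInter] at hz
  exact ⟨z, (hz 0).1.1, ge_of_tendsto' hr_lim fun k => (hz k).1.2,
    ge_of_tendsto' hr_lim fun k => (hz k).2.2⟩

end

/-- Existence of a midpoint with respect to the intrinsic distance. -/
theorem exists_midpoint_intrinsicDist {n : ℕ} (X : Set (EuclideanSpace ℝ (Fin n)))
    (hclosed : IsClosed X) (hconn : IsConnected X)
    (hloc : ∀ x ∈ X, ∃ δ > (0:ℝ), Convex ℝ (Metric.ball x δ ∩ X))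
    (x₀ x₁ : EuclideanSpace ℝ (Fin n)) (hx₀ : x₀ ∈ X) (hx₁ : x₁ ∈ X) :
    ∃ xh ∈ X,
      intrinsicDist X x₀ xh = intrinsicDist X x₀ x₁ / 2 ∧
      intrinsicDist X xh x₁ = intrinsicDist X x₀ x₁ / 2 := by
  have hX : IsLocallyConvex X := hloc
  have hL : intrinsicDist X x₀ x₁ ≠ ⊤ := hX.intrinsicDist_ne_top hconn.isPreconnected hx₀ hx₁
  obtain ⟨z, hz, h₀, h₁⟩ := hX.exists_intrinsicDist_le_half hclosed hL
  rw [intrinsicDist_comm x₁] at h₁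
  have htri : intrinsicDist X x₀ x₁ ≤ intrinsicDist X x₀ z + intrinsicDist X z x₁ :=
    intrinsicDist_triangle
  exact ⟨z, hz, ENNReal.eq_half_of_le_half_of_le_add hL h₀ h₁ htri,
    ENNReal.eq_half_of_le_half_of_le_add hL h₁ h₀ (add_comm (intrinsicDist X x₀ z) _ ▸ htri)⟩
end

section
/- Let X be a connected Hausdorff topological space, let T ⊆ ℝⁿ be a convex subset, and let Ψ : X → T be a continuous proper map. Suppose that for every point x ∈ X there exists an open neighbourhood U ⊆ X of x such that the restriction Ψ|_U : U → Ψ(U) is a convex map and is an open map onto its image Ψ(U). Then: (a) the image Ψ(X) is a convex subset of ℝⁿ; (b) every level set Ψ⁻¹(w), for w ∈ Ψ(X), is connected; (c) Ψ is an open map as a map from X to Ψ(X) (with the subspace topology). -/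
open Set Metric

/-!
Fix `x, y : X` and let `σ = [Ψ x, Ψ y]`. Call a compact convex `K ⊆ T` a join if `x` and `y` lie
in one connected component of `Ψ ⁻¹' K`. Chaining local convex paths across the connected space
`X` produces a join; directed intersections of joins are joins (properness keeps the components
compact, and a directed intersection of compact connected sets is connected), so Zorn gives a
minimal join `K`. If `K` had a point `u ∉ σ`, take a centre `p` farther from `u` than from both
ends of `σ`: the points of `K` farthest from `p` can be cut off by a sublevel set of `dist · p`
that is still a join, because local openness lets each link of the chain of local paths move off
the top level. So `σ` itself is a join, which gives convexity of the image and connectedness of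
the fibres. For openness, the germs at `w` of the local images `Ψ '' U z` agree along the
connected fibre over `w`, and by properness every value of `Ψ` near `w` is taken on some `U z`
with `z` in that fibre.
-/

open Filter Topology

section Topology

variable {Y : Type*} [TopologicalSpace Y]

theorem isPreconnected_iInter_of_directed [T2Space Y] {ι : Type*} [Nonempty ι] {C : ι → Set Y}
    (hdir : Directed (· ⊇ ·) C) (hcomp : ∀ i, IsCompact (C i))
    (hconn : ∀ i, IsPreconnected (C i)) : IsPreconnected (⋂ i, C i) := by
  have hA : IsClosed (⋂ i, C i) := isClosed_iInter fun i => (hcomp i).isClosed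
  have hAc : IsCompact (⋂ i, C i) :=
    (hcomp (Classical.arbitrary ι)).of_isClosed_subset hA (iInter_subset _ _)
  rw [isPreconnected_iff_subset_of_fully_disjoint_closed hA]
  intro u v hu hv hAuv huv
  obtain ⟨u', v', hu', hv', hAu, hAv, huv'⟩ := SeparatedNhds.of_isCompact_isCompact
    (hAc.inter_right hu) (hAc.inter_right hv) (huv.mono inter_subset_right inter_subset_right)
  have hAuv' : ⋂ i, C i ⊆ u' ∪ v' := fun z hz =>
    (hAuv hz).imp (fun hzu => hAu ⟨hz, hzu⟩) (fun hzv => hAv ⟨hz, hzv⟩)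
  obtain ⟨i, hi⟩ := exists_subset_nhds_of_isCompact hdir hcomp
    fun z hz => (hu'.union hv').mem_nhds (hAuv' hz)
  rcases (hconn i).subset_or_subset hu' hv' huv' hi with hiu | hiv
  · refine .inl fun z hz => (hAuv hz).resolve_right fun hzv => ?_
    exact disjoint_left.1 huv' (hiu (iInter_subset _ i hz)) (hAv ⟨hz, hzv⟩)
  · refine .inr fun z hz => (hAuv hz).resolve_left fun hzu => ?_
    exact disjoint_left.1 huv' (hAu ⟨hz, hzu⟩) (hiv (iInter_subset _ i hz))

theorem IsCompact.connectedComponentIn {F : Set Y} (hF : IsCompact F) (x : Y) :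
    IsCompact (connectedComponentIn F x) := by
  by_cases hx : x ∈ F
  · have : CompactSpace F := isCompact_iff_compactSpace.1 hF
    rw [connectedComponentIn_eq_image hx]
    exact isClosed_connectedComponent.isCompact.image continuous_subtype_val
  · rw [connectedComponentIn_eq_empty hx]
    exact isCompact_empty

theorem mem_connectedComponentIn_trans {F : Set Y} {x y z : Y}
    (hxy : y ∈ connectedComponentIn F x) (hyz : z ∈ connectedComponentIn F y) :
    z ∈ connectedComponentIn F x :=
  connectedComponentIn_eq hxy ▸ hyz

theorem exists_isOpen_eq_inter_of_forall_mem_nhdsWithin {s A : Set Y} (hsA : s ⊆ A)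
    (hs : ∀ w ∈ s, s ∈ 𝓝[A] w) : ∃ V, IsOpen V ∧ s = V ∩ A := by
  refine ⟨interior (Aᶜ ∪ s), isOpen_interior, Subset.antisymm
    (fun w hw => ⟨mem_interior_iff_mem_nhds.2 ?_, hsA hw⟩) ?_⟩
  · filter_upwards [mem_nhdsWithin_iff_eventually.1 (hs w hw)] with v hv
    by_cases hvA : v ∈ A
    · exact .inr (hv hvA)
    · exact .inl hvA
  · rintro w ⟨hw, hwA⟩
    exact (interior_subset hw).resolve_left (not_not.2 hwA)

theorem eventually_nhds_fiber_of_isCompact_preimage {X Y : Type*} [TopologicalSpace X]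
    [TopologicalSpace Y] [T2Space Y] [FirstCountableTopology Y] {Ψ : X → Y} {T : Set Y}
    (hcont : Continuous Ψ) (hmem : ∀ x, Ψ x ∈ T)
    (hproper : ∀ K ⊆ T, IsCompact K → IsCompact (Ψ ⁻¹' K)) {p : X → Prop} (x : X)
    (H : ∀ x₀, Ψ x₀ = Ψ x → ∀ᶠ q in 𝓝 x₀, p q) :
    ∀ᶠ v in 𝓝 (Ψ x), ∀ q, Ψ q = v → p q := by
  have hproperMap : IsProperMap (T.codRestrict Ψ hmem) :=
    isProperMap_iff_isCompact_preimage.2 ⟨hcont.codRestrict hmem, fun K hK => by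
      convert hproper _ (by simp) (hK.image continuous_subtype_val) using 1
      ext q
      simp [Set.codRestrict, hmem q]⟩
  have := hproperMap.isClosedMap.eventually_nhds_fiber (p := p) (T.codRestrict Ψ hmem x)
    fun x₀ hx₀ => H x₀ (congrArg Subtype.val hx₀)
  rw [nhds_subtype, eventually_comap] at this
  filter_upwards [this] with v hv q hq
  exact hv ⟨Ψ q, hmem q⟩ hq q rfl

end Topology

theorem ConvexOn.lt_of_mem_openSegment {E : Type*} [AddCommGroup E] [Module ℝ E] {s : Set E}
    {f : E → ℝ} (hf : ConvexOn ℝ s f) {x y z : E} {r : ℝ} (hx : x ∈ s) (hy : y ∈ s)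
    (hxr : f x ≤ r) (hyr : f y < r) (hz : z ∈ openSegment ℝ x y) : f z < r := by
  obtain ⟨α, β, hα, hβ, hαβ, rfl⟩ := hz
  calc f (α • x + β • y) ≤ α * f x + β * f y := hf.2 hx hy hα.le hβ.le hαβ
    _ < α * r + β * r :=
      add_lt_add_of_le_of_lt (mul_le_mul_of_nonneg_left hxr hα.le) (mul_lt_mul_of_pos_left hyr hβ)
    _ = r := by rw [← add_mul, hαβ, one_mul]

section Convexity

variable {E : Type*} [AddCommGroup E] [Module ℝ E] [TopologicalSpace E] [IsTopologicalAddGroup E]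
  [ContinuousSMul ℝ E]

theorem exists_mem_openSegment_of_eventually {a b : E} {p : E → Prop} (h : ∀ᶠ v in 𝓝 a, p v) :
    ∃ z ∈ openSegment ℝ a b, p z := by
  have hlim : Tendsto (AffineMap.lineMap a b) (𝓝[>] (0 : ℝ)) (𝓝 a) := by
    have := (AffineMap.lineMap_continuous (R := ℝ) (p := a) (q := b)).tendsto 0
    rw [AffineMap.lineMap_apply_zero] at this
    exact this.mono_left nhdsWithin_le_nhds
  obtain ⟨t, hpt, ht⟩ := ((hlim.eventually h).and (Ioo_mem_nhdsGT one_pos)).exists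
  exact ⟨_, openSegment_eq_image_lineMap ℝ a b ▸ mem_image_of_mem _ ht, hpt⟩

end Convexity

section Geometry

variable {E : Type*} [NormedAddCommGroup E] [InnerProductSpace ℝ E]

theorem segment_subset_of_isPreconnected {a b : E} {S : Set E} (hS : IsPreconnected S)
    (hSab : S ⊆ segment ℝ a b) (ha : a ∈ S) (hb : b ∈ S) : segment ℝ a b ⊆ S := by
  rcases eq_or_ne a b with rfl | hab
  · simpa [segment_same] using ha
  rw [segment_eq_image_lineMap] at hSab ⊢
  rintro _ ⟨t, ht, rfl⟩
  -- the coordinate along `b - a` identifies the segment with `[0, ‖b - a‖²]`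
  set f : E → ℝ := fun v => inner ℝ (v - a) (b - a)
  have hf : ∀ s : ℝ, f (AffineMap.lineMap a b s) = s * ‖b - a‖ ^ 2 := fun s => by
    simp only [f, AffineMap.lineMap_apply_module', add_sub_cancel_right, real_inner_smul_left,
      real_inner_self_eq_norm_sq]
  have hfS : Icc (0 : ℝ) (‖b - a‖ ^ 2) ⊆ f '' S :=
    (hS.image f (by fun_prop)).Icc_subset ⟨a, ha, by simp [f]⟩ ⟨b, hb, by simp [f]⟩
  obtain ⟨z, hzS, hz⟩ := hfS ⟨by have := ht.1; positivity,
    mul_le_of_le_one_left (by positivity) ht.2⟩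
  obtain ⟨s, -, rfl⟩ := hSab hzS
  rw [hf] at hz
  have hba : ‖b - a‖ ^ 2 ≠ 0 := by
    have := sub_ne_zero.2 hab.symm
    positivity
  rwa [← mul_right_cancel₀ hba hz]

theorem eventually_dist_lt_dist_sub_smul {u v φ : E} (h : inner ℝ φ v < inner ℝ φ u) :
    ∀ᶠ M : ℝ in atTop, dist v (u - M • φ) < dist u (u - M • φ) := by
  have hc : 0 < inner ℝ φ (u - v) := by rw [inner_sub_right]; linarith
  filter_upwards [eventually_gt_atTop (‖v - u‖ ^ 2 / (2 * inner ℝ φ (u - v)))] with M hM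
  rw [div_lt_iff₀ (by positivity)] at hM
  have hvu : inner ℝ (v - u) φ = - inner ℝ φ (u - v) := by
    rw [real_inner_comm, ← inner_neg_right, neg_sub]
  rw [dist_eq_norm, dist_eq_norm, ← pow_lt_pow_iff_left₀ (norm_nonneg _) (norm_nonneg _)
    two_ne_zero, show v - (u - M • φ) = (v - u) + M • φ by abel, sub_sub_cancel,
    norm_add_sq_real, real_inner_smul_right, hvu]
  linarith

theorem exists_dist_lt_of_notMem_segment [CompleteSpace E] {a b u : E} (hu : u ∉ segment ℝ a b) :
    ∃ p, dist a p < dist u p ∧ dist b p < dist u p := by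
  have hclosed : IsClosed (segment ℝ a b) := by
    rw [← convexHull_pair]
    exact ((toFinite _).isCompact_convexHull ℝ).isClosed
  obtain ⟨f, s, hf, hs⟩ := geometric_hahn_banach_closed_point (convex_segment a b) hclosed hu
  have hφ : ∀ v ∈ segment ℝ a b, ∀ᶠ M : ℝ in atTop,
      dist v (u - M • (InnerProductSpace.toDual ℝ E).symm f) <
        dist u (u - M • (InnerProductSpace.toDual ℝ E).symm f) := fun v hv =>
    eventually_dist_lt_dist_sub_smul (by
      simp only [InnerProductSpace.toDual_symm_apply]; linarith [hf v hv])
  obtain ⟨M, ha, hb⟩ :=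
    ((hφ a (left_mem_segment ℝ a b)).and (hφ b (right_mem_segment ℝ a b))).exists
  exact ⟨_, ha, hb⟩

end Geometry

section Joins

variable {X E : Type*} [TopologicalSpace X] [TopologicalSpace E] [AddCommGroup E] [Module ℝ E]

def compactConvexJoins (Ψ : X → E) (T : Set E) (x y : X) : Set (Set E) :=
  {K | IsCompact K ∧ Convex ℝ K ∧ K ⊆ T ∧ y ∈ connectedComponentIn (Ψ ⁻¹' K) x}

theorem sInter_mem_compactConvexJoins [T2Space X] [T2Space E] {Ψ : X → E} {T : Set E}
    (hproper : ∀ K ⊆ T, IsCompact K → IsCompact (Ψ ⁻¹' K)) {x y : X} {c : Set (Set E)}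
    (hc : c ⊆ compactConvexJoins Ψ T x y) (hchain : IsChain (· ⊆ ·) c) (hne : c.Nonempty) :
    ⋂₀ c ∈ compactConvexJoins Ψ T x y := by
  obtain ⟨K₁, hK₁⟩ := hne
  have : Nonempty c := ⟨⟨K₁, hK₁⟩⟩
  set C : c → Set X := fun K => connectedComponentIn (Ψ ⁻¹' K) x
  have hdir : Directed (· ⊇ ·) C := fun K₁ K₂ => by
    rcases hchain.total K₁.2 K₂.2 with h | h
    · exact ⟨K₁, subset_rfl, connectedComponentIn_mono x (preimage_mono h)⟩
    · exact ⟨K₂, connectedComponentIn_mono x (preimage_mono h), subset_rfl⟩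
  have hC : IsPreconnected (⋂ K, C K) := isPreconnected_iInter_of_directed hdir
    (fun K => (hproper K (hc K.2).2.2.1 (hc K.2).1).connectedComponentIn x)
    (fun _ => isPreconnected_connectedComponentIn)
  have hxC : x ∈ ⋂ K, C K := mem_iInter.2 fun K =>
    mem_connectedComponentIn (connectedComponentIn_nonempty_iff.1 ⟨y, (hc K.2).2.2.2⟩)
  have hCc : ⋂ K, C K ⊆ Ψ ⁻¹' ⋂₀ c := fun z hz =>
    mem_sInter.2 fun K hK => connectedComponentIn_subset (Ψ ⁻¹' K) _ (mem_iInter.1 hz ⟨K, hK⟩)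
  refine ⟨(hc hK₁).1.of_isClosed_subset (isClosed_sInter fun K hK => (hc hK).1.isClosed)
    (sInter_subset_of_mem hK₁), convex_sInter fun K hK => (hc hK).2.1,
    (sInter_subset_of_mem hK₁).trans (hc hK₁).2.2.1, hC.subset_connectedComponentIn hxC hCc ?_⟩
  exact mem_iInter.2 fun K => (hc K.2).2.2.2

end Joins

theorem convex_range_of_forall_mem_connectedComponentIn {X E : Type*} [TopologicalSpace X]
    [NormedAddCommGroup E] [InnerProductSpace ℝ E] {Ψ : X → E} (hcont : Continuous Ψ)
    (hjoin : ∀ x y, y ∈ connectedComponentIn (Ψ ⁻¹' segment ℝ (Ψ x) (Ψ y)) x) :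
    Convex ℝ (range Ψ) := by
  rw [convex_iff_segment_subset]
  rintro _ ⟨x, rfl⟩ _ ⟨y, rfl⟩
  have hx : x ∈ connectedComponentIn (Ψ ⁻¹' segment ℝ (Ψ x) (Ψ y)) x :=
    mem_connectedComponentIn (left_mem_segment ℝ _ _)
  exact (segment_subset_of_isPreconnected
    (isPreconnected_connectedComponentIn.image Ψ hcont.continuousOn)
    (image_subset_iff.2 (connectedComponentIn_subset _ _)) (mem_image_of_mem Ψ hx)
    (mem_image_of_mem Ψ (hjoin x y))).trans (image_subset_range _ _)

theorem isPreconnected_preimage_singleton_of_forall_mem_connectedComponentIn {X E : Type*}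
    [TopologicalSpace X] [AddCommGroup E] [Module ℝ E] {Ψ : X → E}
    (hjoin : ∀ x y, y ∈ connectedComponentIn (Ψ ⁻¹' segment ℝ (Ψ x) (Ψ y)) x) (w : E) :
    IsPreconnected (Ψ ⁻¹' {w}) := by
  refine isPreconnected_of_forall_pair fun x (hx : Ψ x = w) y (hy : Ψ y = w) =>
    ⟨_, connectedComponentIn_subset _ x, mem_connectedComponentIn hx, ?_,
      isPreconnected_connectedComponentIn⟩
  simpa [hx, hy, segment_same] using hjoin x y

section ConvexMaps

variable {n : ℕ} {X : Type*} [TopologicalSpace X] {Ψ : X → EuclideanSpace ℝ (Fin n)}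

theorem MonotoneStraight.mem_segment {c : ℝ → EuclideanSpace ℝ (Fin n)} (h : MonotoneStraight c)
    {t : ℝ} (ht : t ∈ Icc (0 : ℝ) 1) : c t ∈ segment ℝ (c 0) (c 1) := by
  rcases h with hconst | ⟨himage, -⟩
  · rw [hconst t ht, hconst 1 ⟨zero_le_one, le_rfl⟩]
    exact left_mem_segment ℝ _ _
  · exact himage ▸ mem_image_of_mem c ht

theorem IsConvexMapOn.mem_connectedComponentIn {U : Set X} (hU : IsConvexMapOn Ψ U) {x y : X}
    (hx : x ∈ U) (hy : y ∈ U) :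
    y ∈ connectedComponentIn (Ψ ⁻¹' segment ℝ (Ψ x) (Ψ y)) x := by
  obtain ⟨γ, hγ, -, rfl, rfl, hstraight⟩ := hU x hx y hy
  have hseg : γ '' Icc 0 1 ⊆ Ψ ⁻¹' segment ℝ (Ψ (γ 0)) (Ψ (γ 1)) :=
    image_subset_iff.2 fun t ht => hstraight.mem_segment ht
  exact (isPreconnected_Icc.image γ hγ).subset_connectedComponentIn
    (mem_image_of_mem γ (left_mem_Icc.2 zero_le_one)) hseg
    (mem_image_of_mem γ (right_mem_Icc.2 zero_le_one))

theorem IsConvexMapOn.convex_image {U : Set X} (hU : IsConvexMapOn Ψ U) : Convex ℝ (Ψ '' U) := by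
  rw [convex_iff_segment_subset]
  rintro _ ⟨x, hx, rfl⟩ _ ⟨y, hy, rfl⟩
  obtain ⟨γ, -, hγU, rfl, rfl, hstraight⟩ := hU x hx y hy
  refine Subset.trans ?_ (image_comp Ψ γ _ ▸ image_mono (image_subset_iff.2 hγU))
  rcases hstraight with hconst | ⟨himage, -⟩
  · rw [show Ψ (γ 1) = Ψ (γ 0) from hconst 1 ⟨zero_le_one, le_rfl⟩, segment_same,
      singleton_subset_iff]
    exact mem_image_of_mem _ (left_mem_Icc.2 zero_le_one)
  · exact himage.ge

theorem IsOpenOnto.eventually_mem_image_inter {U O : Set X} (hU : IsOpenOnto Ψ U) (hO : IsOpen O)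
    {z : X} (hz : z ∈ O ∩ U) : ∀ᶠ v in 𝓝 (Ψ z), v ∈ Ψ '' U → v ∈ Ψ '' (O ∩ U) := by
  obtain ⟨V, hV, hOU⟩ := hU O hO
  have hzV : Ψ z ∈ V := (hOU ▸ mem_image_of_mem Ψ hz).1
  filter_upwards [hV.mem_nhds hzV] with v hvV hvU
  exact hOU ▸ ⟨hvV, hvU⟩

theorem IsOpenOnto.exists_mem_inter_lt {U U' : Set X} (hUc : IsConvexMapOn Ψ U)
    (hUt : IsOpenOnto Ψ U) (hU' : IsOpen U') {K : Set (EuclideanSpace ℝ (Fin n))}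
    {L : EuclideanSpace ℝ (Fin n) → ℝ} {r : ℝ} (hL : ConvexOn ℝ K L) (hLr : ∀ v ∈ K, L v ≤ r)
    {c g : X} (hc : c ∈ U' ∩ U) (hcK : Ψ c ∈ K) (hg : g ∈ U) (hgK : Ψ g ∈ K)
    (hgr : L (Ψ g) < r) : ∃ g' ∈ U' ∩ U, Ψ g' ∈ K ∧ L (Ψ g') < r := by
  -- `Ψ '' (U' ∩ U)` is a neighbourhood of `Ψ c` in the convex set `Ψ '' U`, so it meets the open
  -- segment towards `Ψ g`, on which `L < r` by convexity
  obtain ⟨z, hz, hzU'⟩ :=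
    exists_mem_openSegment_of_eventually (b := Ψ g) (hUt.eventually_mem_image_inter hU' hc)
  obtain ⟨g', hg', rfl⟩ := hzU' (hUc.convex_image.openSegment_subset
    (mem_image_of_mem Ψ hc.2) (mem_image_of_mem Ψ hg) hz)
  exact ⟨g', hg', hL.1.openSegment_subset hcK hgK hz,
    hL.lt_of_mem_openSegment hcK hgK (hLr _ hcK) hgr hz⟩

theorem IsConvexMapOn.mem_connectedComponentIn_sublevel {U : Set X} (hU : IsConvexMapOn Ψ U)
    {K : Set (EuclideanSpace ℝ (Fin n))} {L : EuclideanSpace ℝ (Fin n) → ℝ}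
    (hL : ConvexOn ℝ K L) {b : ℝ} {x g g' : X}
    (hgx : g ∈ connectedComponentIn (Ψ ⁻¹' {v ∈ K | L v ≤ b}) x) (hg : g ∈ U) (hg' : g' ∈ U)
    (hg'K : Ψ g' ∈ K) :
    g' ∈ connectedComponentIn (Ψ ⁻¹' {v ∈ K | L v ≤ max b (L (Ψ g'))}) x := by
  have hgK : Ψ g ∈ {v ∈ K | L v ≤ b} := connectedComponentIn_subset (Ψ ⁻¹' _) _ hgx
  have hmono : {v ∈ K | L v ≤ b} ⊆ {v ∈ K | L v ≤ max b (L (Ψ g'))} :=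
    fun v hv => ⟨hv.1, hv.2.trans (le_max_left _ _)⟩
  have hseg : segment ℝ (Ψ g) (Ψ g') ⊆ {v ∈ K | L v ≤ max b (L (Ψ g'))} :=
    (hL.convex_le _).segment_subset (hmono hgK) ⟨hg'K, le_max_right _ _⟩
  exact mem_connectedComponentIn_trans (connectedComponentIn_mono x (preimage_mono hmono) hgx)
    (connectedComponentIn_mono g (preimage_mono hseg) (hU.mem_connectedComponentIn hg hg'))

structure IsConvexOpenCover (Ψ : X → EuclideanSpace ℝ (Fin n)) (U : X → Set X) : Prop where
  isOpen : ∀ x, IsOpen (U x)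
  mem : ∀ x, x ∈ U x
  isConvexMapOn : ∀ x, IsConvexMapOn Ψ (U x)
  isOpenOnto : ∀ x, IsOpenOnto Ψ (U x)

namespace IsConvexOpenCover

variable {U : X → Set X}

theorem exists_finite_joining [PreconnectedSpace X] (hU : IsConvexOpenCover Ψ U)
    {T : Set (EuclideanSpace ℝ (Fin n))} (hmem : ∀ x, Ψ x ∈ T) (x y : X) :
    ∃ A : Set (EuclideanSpace ℝ (Fin n)), A.Finite ∧ A ⊆ T ∧
      y ∈ connectedComponentIn (Ψ ⁻¹' convexHull ℝ A) x := by
  refine PreconnectedSpace.induction₂' (fun x y => ∃ A : Set (EuclideanSpace ℝ (Fin n)),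
    A.Finite ∧ A ⊆ T ∧ y ∈ connectedComponentIn (Ψ ⁻¹' convexHull ℝ A) x)
    (fun x => ?_) ⟨fun x y z => ?_⟩ x y
  · have hpair : ∀ a ∈ U x, ∀ b ∈ U x, ∃ A : Set (EuclideanSpace ℝ (Fin n)), A.Finite ∧
        A ⊆ T ∧ b ∈ connectedComponentIn (Ψ ⁻¹' convexHull ℝ A) a := fun a ha b hb =>
      ⟨{Ψ a, Ψ b}, toFinite _, insert_subset (hmem a) (singleton_subset_iff.2 (hmem b)),
        by rw [convexHull_pair]; exact (hU.isConvexMapOn x).mem_connectedComponentIn ha hb⟩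
    filter_upwards [(hU.isOpen x).mem_nhds (hU.mem x)] with y hy
    exact ⟨hpair x (hU.mem x) y hy, hpair y hy x (hU.mem x)⟩
  · rintro ⟨A, hA, hAT, hxy⟩ ⟨B, hB, hBT, hyz⟩
    exact ⟨A ∪ B, hA.union hB, union_subset hAT hBT, mem_connectedComponentIn_trans
      (connectedComponentIn_mono x (preimage_mono (convexHull_mono subset_union_left)) hxy)
      (connectedComponentIn_mono y (preimage_mono (convexHull_mono subset_union_right)) hyz)⟩

theorem exists_sublevel_of_mem_inter (hU : IsConvexOpenCover Ψ U)
    {K : Set (EuclideanSpace ℝ (Fin n))} {L : EuclideanSpace ℝ (Fin n) → ℝ} {r : ℝ}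
    (hL : ConvexOn ℝ K L) (hLr : ∀ v ∈ K, L v ≤ r) {x c i i' : X} (hc : c ∈ U i' ∩ U i)
    (hcK : Ψ c ∈ K) :
    (∃ b < r, ∃ g ∈ U i, g ∈ connectedComponentIn (Ψ ⁻¹' {v ∈ K | L v ≤ b}) x) →
      ∃ b < r, ∃ g ∈ U i', g ∈ connectedComponentIn (Ψ ⁻¹' {v ∈ K | L v ≤ b}) x := by
  rintro ⟨b, hb, g, hg, hgx⟩
  have hgK : Ψ g ∈ {v ∈ K | L v ≤ b} := connectedComponentIn_subset (Ψ ⁻¹' _) _ hgx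
  obtain ⟨g', hg', hg'K, hg'r⟩ := (hU.isOpenOnto i).exists_mem_inter_lt (hU.isConvexMapOn i)
    (hU.isOpen i') hL hLr hc hcK hg hgK.1 (hgK.2.trans_lt hb)
  exact ⟨_, max_lt hb hg'r, g', hg'.1,
    (hU.isConvexMapOn i).mem_connectedComponentIn_sublevel hL hgx hg hg'.2 hg'K⟩

theorem exists_sublevel_joining (hU : IsConvexOpenCover Ψ U)
    {K : Set (EuclideanSpace ℝ (Fin n))} {L : EuclideanSpace ℝ (Fin n) → ℝ} {r : ℝ}
    (hL : ConvexOn ℝ K L) (hLr : ∀ v ∈ K, L v ≤ r) {x y : X}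
    (hxy : y ∈ connectedComponentIn (Ψ ⁻¹' K) x) (hx : L (Ψ x) < r) (hy : L (Ψ y) < r) :
    ∃ b < r, y ∈ connectedComponentIn (Ψ ⁻¹' {v ∈ K | L v ≤ b}) x := by
  have hxK : x ∈ Ψ ⁻¹' K := connectedComponentIn_nonempty_iff.1 ⟨y, hxy⟩
  let Q : X → Prop := fun a =>
    ∃ b < r, ∃ g ∈ U a, g ∈ connectedComponentIn (Ψ ⁻¹' {v ∈ K | L v ≤ b}) x
  have hQ : Q x → Q y := by
    refine isPreconnected_connectedComponentIn.induction₂' (fun a a' => Q a → Q a')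
      (fun a _ => ?_) (fun _ _ _ _ _ _ h₁ h₂ => h₂ ∘ h₁) (mem_connectedComponentIn hxK) hxy
    filter_upwards [mem_nhdsWithin_of_mem_nhds ((hU.isOpen a).mem_nhds (hU.mem a)),
      self_mem_nhdsWithin] with a' ha' ha'C
    have ha'K : Ψ a' ∈ K := connectedComponentIn_subset (Ψ ⁻¹' K) _ ha'C
    exact ⟨hU.exists_sublevel_of_mem_inter hL hLr ⟨hU.mem a', ha'⟩ ha'K,
      hU.exists_sublevel_of_mem_inter hL hLr ⟨ha', hU.mem a'⟩ ha'K⟩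
  obtain ⟨b, hb, g, hg, hgx⟩ :=
    hQ ⟨L (Ψ x), hx, x, hU.mem x, mem_connectedComponentIn ⟨hxK, le_rfl⟩⟩
  exact ⟨_, max_lt hb hy, (hU.isConvexMapOn y).mem_connectedComponentIn_sublevel hL hgx hg
    (hU.mem y) (connectedComponentIn_subset (Ψ ⁻¹' K) _ hxy)⟩

theorem exists_ssubset_mem_compactConvexJoins (hU : IsConvexOpenCover Ψ U)
    {T K : Set (EuclideanSpace ℝ (Fin n))} {x y : X} (hK : K ∈ compactConvexJoins Ψ T x y)
    {u : EuclideanSpace ℝ (Fin n)} (hu : u ∈ K) (hux : u ∉ segment ℝ (Ψ x) (Ψ y)) :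
    ∃ K' ∈ compactConvexJoins Ψ T x y, K' ⊂ K := by
  obtain ⟨hKc, hKconv, hKT, hxy⟩ := hK
  obtain ⟨p, hxp, hyp⟩ := exists_dist_lt_of_notMem_segment hux
  have hdist : Continuous fun v => dist v p := continuous_id.dist continuous_const
  obtain ⟨e, he, hmax⟩ := hKc.exists_isMaxOn ⟨u, hu⟩ hdist.continuousOn
  have hmax : ∀ v ∈ K, dist v p ≤ dist e p := isMaxOn_iff.1 hmax
  obtain ⟨b, hb, hjoin⟩ := hU.exists_sublevel_joining (convexOn_dist p hKconv) hmax hxy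
    (hxp.trans_le (hmax u hu)) (hyp.trans_le (hmax u hu))
  refine ⟨{v ∈ K | dist v p ≤ b}, ⟨hKc.inter_right (isClosed_le hdist continuous_const),
    (convexOn_dist p hKconv).convex_le b, (sep_subset K _).trans hKT, hjoin⟩,
    (ssubset_iff_of_subset (sep_subset K _)).2 ⟨e, he, fun he' => hb.not_ge he'.2⟩⟩

theorem mem_connectedComponentIn_preimage_segment [T2Space X] [PreconnectedSpace X]
    (hU : IsConvexOpenCover Ψ U) {T : Set (EuclideanSpace ℝ (Fin n))} (hT : Convex ℝ T)
    (hmem : ∀ x, Ψ x ∈ T) (hproper : ∀ K ⊆ T, IsCompact K → IsCompact (Ψ ⁻¹' K)) (x y : X) :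
    y ∈ connectedComponentIn (Ψ ⁻¹' segment ℝ (Ψ x) (Ψ y)) x := by
  obtain ⟨A, hA, hAT, hxy⟩ := hU.exists_finite_joining hmem x y
  obtain ⟨m, -, hm⟩ := zorn_superset_nonempty (compactConvexJoins Ψ T x y)
    (fun c hc hchain hne => ⟨⋂₀ c, sInter_mem_compactConvexJoins hproper hc hchain hne,
      fun _ => sInter_subset_of_mem⟩)
    (convexHull ℝ A) ⟨hA.isCompact_convexHull ℝ, convex_convexHull ℝ A, convexHull_min hAT hT, hxy⟩
  have hmσ : m ⊆ segment ℝ (Ψ x) (Ψ y) := fun u hu => by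
    by_contra hux
    obtain ⟨K', hK', hK'm⟩ := hU.exists_ssubset_mem_compactConvexJoins hm.prop hu hux
    exact hK'm.2 (hm.2 hK' hK'm.1)
  exact connectedComponentIn_mono x (preimage_mono hmσ) hm.prop.2.2.2

theorem eventually_mem_image_of_mem_fiber (hU : IsConvexOpenCover Ψ U) {x x₀ : X}
    (hfib : IsPreconnected (Ψ ⁻¹' {Ψ x})) (hx₀ : Ψ x₀ = Ψ x) :
    ∀ᶠ v in 𝓝 (Ψ x), v ∈ Ψ '' U x₀ → v ∈ Ψ '' U x := by
  refine hfib.induction₂' (fun a b => ∀ᶠ v in 𝓝 (Ψ x), v ∈ Ψ '' U b → v ∈ Ψ '' U a)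
    (fun a _ => ?_) (fun a b c _ _ _ hab hbc => ?_) rfl hx₀
  · filter_upwards [mem_nhdsWithin_of_mem_nhds ((hU.isOpen a).mem_nhds (hU.mem a)),
      self_mem_nhdsWithin] with b hb (hbx : Ψ b = Ψ x)
    constructor
    · filter_upwards [hbx ▸ (hU.isOpenOnto b).eventually_mem_image_inter (hU.isOpen a)
        ⟨hb, hU.mem b⟩] with v hv hvb
      exact image_mono inter_subset_left (hv hvb)
    · filter_upwards [hbx ▸ (hU.isOpenOnto a).eventually_mem_image_inter (hU.isOpen b)
        ⟨hU.mem b, hb⟩] with v hv hva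
      exact image_mono inter_subset_left (hv hva)
  · filter_upwards [hab, hbc] with v h₁ h₂ using h₁ ∘ h₂

theorem eventually_mem_range_imp_mem_image (hU : IsConvexOpenCover Ψ U) (hcont : Continuous Ψ)
    {T : Set (EuclideanSpace ℝ (Fin n))} (hmem : ∀ x, Ψ x ∈ T)
    (hproper : ∀ K ⊆ T, IsCompact K → IsCompact (Ψ ⁻¹' K)) {x : X}
    (hfib : IsPreconnected (Ψ ⁻¹' {Ψ x})) :
    ∀ᶠ v in 𝓝 (Ψ x), v ∈ range Ψ → v ∈ Ψ '' U x := by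
  have := eventually_nhds_fiber_of_isCompact_preimage hcont hmem hproper
    (p := fun q => Ψ q ∈ Ψ '' U x) x fun x₀ hx₀ => by
      have hgerm := hU.eventually_mem_image_of_mem_fiber hfib hx₀
      rw [← hx₀] at hgerm
      filter_upwards [(hU.isOpen x₀).mem_nhds (hU.mem x₀), (hcont.tendsto x₀).eventually hgerm]
        with q hq hq'
      exact hq' (mem_image_of_mem Ψ hq)
  filter_upwards [this]
  rintro _ hv ⟨q, rfl⟩
  exact hv q rfl

theorem isOpenOnto_univ (hU : IsConvexOpenCover Ψ U) (hcont : Continuous Ψ)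
    {T : Set (EuclideanSpace ℝ (Fin n))} (hmem : ∀ x, Ψ x ∈ T)
    (hproper : ∀ K ⊆ T, IsCompact K → IsCompact (Ψ ⁻¹' K))
    (hfib : ∀ w, IsPreconnected (Ψ ⁻¹' {w})) : IsOpenOnto Ψ univ := by
  intro O hO
  rw [inter_univ, image_univ]
  refine exists_isOpen_eq_inter_of_forall_mem_nhdsWithin (image_subset_range Ψ O) ?_
  rintro _ ⟨x, hxO, rfl⟩
  rw [mem_nhdsWithin_iff_eventually]
  filter_upwards [hU.eventually_mem_range_imp_mem_image hcont hmem hproper (hfib _),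
    (hU.isOpenOnto x).eventually_mem_image_inter hO ⟨hxO, hU.mem x⟩] with v hrange hOU hv
  exact image_mono inter_subset_left (hOU (hrange hv))

end IsConvexOpenCover

end ConvexMaps

/-- Local convexity and openness imply: convex image, connected level sets, and openness
onto the image. -/
theorem convex_image_connected_fibers_open {n : ℕ} {X : Type*} [TopologicalSpace X]
    [T2Space X] [ConnectedSpace X]
    (T : Set (EuclideanSpace ℝ (Fin n))) (hT : Convex ℝ T)
    (Ψ : X → EuclideanSpace ℝ (Fin n)) (hcont : Continuous Ψ) (hmem : ∀ x, Ψ x ∈ T)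
    (hproper : ∀ K : Set (EuclideanSpace ℝ (Fin n)), K ⊆ T → IsCompact K →
      IsCompact (Ψ ⁻¹' K))
    (hloc : ∀ x : X, ∃ U : Set X, IsOpen U ∧ x ∈ U ∧ IsConvexMapOn Ψ U ∧ IsOpenOnto Ψ U) :
    Convex ℝ (Set.range Ψ) ∧
    (∀ w ∈ Set.range Ψ, IsConnected (Ψ ⁻¹' {w})) ∧
    IsOpenOnto Ψ Set.univ := by
  choose U hUo hUm hUc hUt using hloc
  have hU : IsConvexOpenCover Ψ U := ⟨hUo, hUm, hUc, hUt⟩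
  have hjoin := hU.mem_connectedComponentIn_preimage_segment hT hmem hproper
  have hfib := isPreconnected_preimage_singleton_of_forall_mem_connectedComponentIn hjoin
  refine ⟨convex_range_of_forall_mem_connectedComponentIn hcont hjoin,
    fun w ⟨x, hx⟩ => ⟨⟨x, hx⟩, hfib w⟩, hU.isOpenOnto_univ hcont hmem hproper hfib⟩
end

section
/- Let X be a Hausdorff topological space and Ψ : X → ℝⁿ a convex map. Then for every convex subset A ⊆ ℝⁿ, the restriction of Ψ to the preimage Ψ⁻¹(A) is also a convex map. -/
open Set Metric

/-- The restriction of a convex map to the preimage of a convex set is a convex map. -/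
theorem isConvexMapOn_preimage_of_convex {n : ℕ} {X : Type*} [TopologicalSpace X]
    [T2Space X]
    (Ψ : X → EuclideanSpace ℝ (Fin n)) (hcont : Continuous Ψ)
    (hconv : IsConvexMapOn Ψ Set.univ)
    (A : Set (EuclideanSpace ℝ (Fin n))) (hA : Convex ℝ A) :
    IsConvexMapOn Ψ (Ψ ⁻¹' A) := by
  intro x₀ hx₀ x₁ hx₁
  obtain ⟨γ, hγc, -, hγ0, hγ1, hms⟩ := hconv x₀ (mem_univ _) x₁ (mem_univ _)
  refine ⟨γ, hγc, ?_, hγ0, hγ1, hms⟩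
  intro t ht
  rcases hms with hconst | ⟨himg, -⟩
  · have := hconst t ht
    simp only [Function.comp_apply] at this
    simp only [mem_preimage, this, hγ0]
    exact hx₀
  · have : (Ψ ∘ γ) t ∈ (Ψ ∘ γ) '' Set.Icc (0:ℝ) 1 := mem_image_of_mem _ ht
    rw [himg] at this
    simp only [Function.comp_apply, hγ0, hγ1] at this
    exact hA.segment_subset hx₀ hx₁ this
end

section
/- Let X be a Hausdorff topological space and Ψ : X → ℝⁿ a continuous map with the path lifting property: for every continuous path γ̄ : [0,1] → ℝⁿ whose image lies in Ψ(X) and every point x ∈ Ψ⁻¹(γ̄(0)) there exists a continuous path γ : [0,1] → X with γ(0) = x and Ψ∘γ = γ̄. If the image Ψ(X) is convex and every level set Ψ⁻¹(w), w ∈ Ψ(X), is path connected, then Ψ : X → ℝⁿ is a convex map. -/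
open Set Metric

/-! The lift of the segment from `Ψ x₀` to `Ψ x₁` that starts at `x₀` ends somewhere in the
level set of `Ψ x₁`; following it by a path inside that level set to `x₁` gives a path whose
image under `Ψ` runs along the segment once and then rests at its endpoint. -/

open unitInterval

theorem monotoneStraight_of_eq_lineMap_comp {n : ℕ} {c : ℝ → EuclideanSpace ℝ (Fin n)}
    {a b : EuclideanSpace ℝ (Fin n)} {φ : ℝ → ℝ} (hφ : ContinuousOn φ I) (hmono : MonotoneOn φ I)
    (hφ0 : φ 0 = 0) (hφ1 : φ 1 = 1) (hc : ∀ t ∈ I, c t = AffineMap.lineMap a b (φ t)) :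
    MonotoneStraight c := by
  have hc0 : c 0 = a := by simp [hc 0 zero_mem, hφ0]
  have hc1 : c 1 = b := by simp [hc 1 one_mem, hφ1]
  have himage : φ '' I = I := by
    calc φ '' I = Icc (φ 0) (φ 1) :=
          hmono.image_Icc_subset.antisymm (intermediate_value_Icc zero_le_one hφ)
      _ = I := by rw [hφ0, hφ1]
  right
  constructor
  · change c '' I = segment ℝ (c 0) (c 1)
    rw [hc0, hc1, segment_eq_image_lineMap]
    calc c '' I = AffineMap.lineMap a b '' (φ '' I) := by rw [image_image]; exact image_congr hc
      _ = _ := by rw [himage]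
  · intro t₁ t₂ t₃ h₁ h₁₂ h₂₃ h₃
    have m₁ : t₁ ∈ I := ⟨h₁, by linarith⟩
    have m₂ : t₂ ∈ I := ⟨by linarith, by linarith⟩
    have m₃ : t₃ ∈ I := ⟨by linarith, h₃⟩
    have hle₁₂ := hmono m₁ m₂ h₁₂.le
    have hle₂₃ := hmono m₂ m₃ h₂₃.le
    rw [hc t₁ m₁, hc t₂ m₂, hc t₃ m₃, ← image_segment, segment_eq_Icc (hle₁₂.trans hle₂₃)]
    exact mem_image_of_mem _ ⟨hle₁₂, hle₂₃⟩

theorem Path.apply_trans_extend_of_const_right {X Y : Type*} [TopologicalSpace X]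
    {x y z : X} {p : Path x y} {q : Path y z} {Ψ : X → Y} {c : ℝ → Y}
    (hp : ∀ s : I, Ψ (p s) = c s) (hq : ∀ s : I, Ψ (q s) = c 1) :
    ∀ t ∈ I, Ψ ((p.trans q).extend t) = c (min (2 * t) 1) := by
  intro t ht
  rw [Path.extend_apply _ ht, Path.trans_apply]
  split_ifs with h
  · rw [hp, min_eq_left (by linarith)]
  · rw [hq, min_eq_right (by linarith [not_le.mp h])]

theorem isConvexMap_of_pathLifting_general {n : ℕ} {X : Type*} [TopologicalSpace X]
    (Ψ : X → EuclideanSpace ℝ (Fin n))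
    (hlift : ∀ c : ℝ → EuclideanSpace ℝ (Fin n), ContinuousOn c (Set.Icc 0 1) →
      (∀ t ∈ Set.Icc (0:ℝ) 1, c t ∈ Set.range Ψ) →
      ∀ x : X, Ψ x = c 0 →
        ∃ γ : ℝ → X, ContinuousOn γ (Set.Icc 0 1) ∧ γ 0 = x ∧
          ∀ t ∈ Set.Icc (0:ℝ) 1, Ψ (γ t) = c t)
    (himg : Convex ℝ (Set.range Ψ))
    (hfib : ∀ w ∈ Set.range Ψ, IsPathConnected (Ψ ⁻¹' {w})) :
    IsConvexMapOn Ψ Set.univ := by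
  intro x₀ _ x₁ _
  set ℓ : ℝ →ᵃ[ℝ] EuclideanSpace ℝ (Fin n) := AffineMap.lineMap (Ψ x₀) (Ψ x₁)
  have hℓ : ∀ t ∈ I, ℓ t ∈ range Ψ := fun _ ht =>
    himg.lineMap_mem ⟨x₀, rfl⟩ ⟨x₁, rfl⟩ ht
  obtain ⟨g, hg, hg0, hΨg⟩ :=
    hlift ℓ AffineMap.lineMap_continuous.continuousOn hℓ x₀ (by simp [ℓ])
  let lift : Path x₀ (g 1) := Path.ofLine hg hg0 rfl
  obtain ⟨inFiber, hinFiber⟩ := (hfib (Ψ x₁) ⟨x₁, rfl⟩).joinedIn (g 1)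
    (by simpa [ℓ] using hΨg 1 one_mem) x₁ rfl
  have hΨγ := Path.apply_trans_extend_of_const_right (p := lift) (c := ℓ) (fun s => hΨg s s.2)
    (fun s => by simpa [ℓ] using hinFiber s)
  refine ⟨(lift.trans inFiber).extend, (Path.continuous_extend _).continuousOn,
    fun _ _ => trivial, Path.extend_zero _, Path.extend_one _, ?_⟩
  exact monotoneStraight_of_eq_lineMap_comp (by fun_prop)
    (fun _ _ _ _ hst => min_le_min_right 1 (by linarith)) (by simp) (by norm_num) hΨγ

/-- If a continuous map has the path lifting property, a convex image, and path connected
level sets, then it is a convex map. -/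
theorem isConvexMap_of_pathLifting {n : ℕ} {X : Type*} [TopologicalSpace X] [T2Space X]
    (Ψ : X → EuclideanSpace ℝ (Fin n)) (hcont : Continuous Ψ)
    (hlift : ∀ c : ℝ → EuclideanSpace ℝ (Fin n), ContinuousOn c (Set.Icc 0 1) →
      (∀ t ∈ Set.Icc (0:ℝ) 1, c t ∈ Set.range Ψ) →
      ∀ x : X, Ψ x = c 0 →
        ∃ γ : ℝ → X, ContinuousOn γ (Set.Icc 0 1) ∧ γ 0 = x ∧
          ∀ t ∈ Set.Icc (0:ℝ) 1, Ψ (γ t) = c t)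
    (himg : Convex ℝ (Set.range Ψ))
    (hfib : ∀ w ∈ Set.range Ψ, IsPathConnected (Ψ ⁻¹' {w})) :
    IsConvexMapOn Ψ Set.univ :=
  isConvexMap_of_pathLifting_general Ψ hlift himg hfib
end

section
/- Let X be a Hausdorff topological space, Ψ : X → ℝⁿ a continuous map, w₀ ∈ ℝⁿ, and {U_i}_{i=1}^N a finite collection of open subsets of X whose union contains Ψ⁻¹(w₀), such that for each i the restriction Ψ|_{U_i} : U_i → Ψ(U_i) is an open map onto its image. Let [x] be a connected component of Ψ⁻¹(w₀). Then there exists ε > 0 such that for all indices i, j with U_i ∩ U_j ∩ [x] ≠ ∅, one has Ψ(U_i) ∩ B(w₀,ε) = Ψ(U_i ∩ U_j) ∩ B(w₀,ε). -/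
open Set Metric

/-- For a finite open cover of a level set, with each restriction open onto its image:
near the level, the image of `U i` agrees with the image of `U i ∩ U j` whenever `U i ∩ U j` meets the component. -/
theorem exists_eps_image_inter_eq {n : ℕ} {X : Type*} [TopologicalSpace X] [T2Space X]
    {N : ℕ}
    (Ψ : X → EuclideanSpace ℝ (Fin n)) (hcont : Continuous Ψ)
    (w₀ : EuclideanSpace ℝ (Fin n))
    (U : Fin N → Set X) (hUopen : ∀ i, IsOpen (U i)) (hcover : Ψ ⁻¹' {w₀} ⊆ ⋃ i, U i)
    (hUopenOnto : ∀ i, IsOpenOnto Ψ (U i))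
    (x : X) (hx : x ∈ Ψ ⁻¹' {w₀}) :
    ∃ ε > (0:ℝ), ∀ i j : Fin N,
      (U i ∩ U j ∩ connectedComponentIn (Ψ ⁻¹' {w₀}) x).Nonempty →
      Ψ '' U i ∩ Metric.ball w₀ ε = Ψ '' (U i ∩ U j) ∩ Metric.ball w₀ ε := by
  classical
  have key : ∀ i j : Fin N, ∃ ε > (0:ℝ),
      (U i ∩ U j ∩ connectedComponentIn (Ψ ⁻¹' {w₀}) x).Nonempty →
      ∀ δ : ℝ, δ ≤ ε →
        Ψ '' U i ∩ Metric.ball w₀ δ = Ψ '' (U i ∩ U j) ∩ Metric.ball w₀ δ := by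
    intro i j
    by_cases h : (U i ∩ U j ∩ connectedComponentIn (Ψ ⁻¹' {w₀}) x).Nonempty
    · obtain ⟨y, ⟨⟨hyi, hyj⟩, hyc⟩⟩ := h
      have hyw : Ψ y = w₀ := by
        have := connectedComponentIn_subset (Ψ ⁻¹' {w₀}) x hyc
        simpa using this
      obtain ⟨V, hVopen, hV⟩ := hUopenOnto i (U j) (hUopen j)
      have hw0V : w₀ ∈ V := by
        have hmem : w₀ ∈ Ψ '' (U j ∩ U i) := ⟨y, ⟨hyj, hyi⟩, hyw⟩
        rw [hV] at hmem
        exact hmem.1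
      obtain ⟨ε, hε, hball⟩ := Metric.isOpen_iff.1 hVopen w₀ hw0V
      refine ⟨ε, hε, fun _ δ hδ => ?_⟩
      apply Set.Subset.antisymm
      · rintro z ⟨⟨a, haU, rfl⟩, hzb⟩
        have hzV : Ψ a ∈ V := hball (Metric.ball_subset_ball hδ hzb)
        have : Ψ a ∈ Ψ '' (U j ∩ U i) := by
          rw [hV]; exact ⟨hzV, ⟨a, haU, rfl⟩⟩
        obtain ⟨b, ⟨hbj, hbi⟩, hb⟩ := this
        exact ⟨⟨b, ⟨hbi, hbj⟩, hb⟩, hzb⟩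
      · rintro z ⟨⟨a, ⟨hai, _⟩, rfl⟩, hzb⟩
        exact ⟨⟨a, hai, rfl⟩, hzb⟩
    · exact ⟨1, one_pos, fun h' => absurd h' h⟩
  choose e hpos hQ using key
  set s : Finset ℝ :=
    insert 1 (Finset.image (fun p : Fin N × Fin N => e p.1 p.2) Finset.univ) with hs_def
  have hs : s.Nonempty := ⟨1, Finset.mem_insert_self _ _⟩
  refine ⟨s.min' hs, ?_, ?_⟩
  · rw [gt_iff_lt, Finset.lt_min'_iff]
    intro y hy
    rcases Finset.mem_insert.1 hy with rfl | hy
    · norm_num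
    · obtain ⟨p, _, rfl⟩ := Finset.mem_image.1 hy
      exact hpos p.1 p.2
  · intro i j hij
    refine hQ i j hij _ (Finset.min'_le s _ ?_)
    exact Finset.mem_insert_of_mem
      (Finset.mem_image.2 ⟨(i, j), Finset.mem_univ _, rfl⟩)
end

section
/- Let X be a Hausdorff topological space, Ψ : X → ℝⁿ a continuous map, w₀ ∈ ℝⁿ, and {U_i}_{i=1}^N a finite collection of open subsets of X whose union contains Ψ⁻¹(w₀), such that for each i the restriction Ψ|_{U_i} : U_i → Ψ(U_i) is an open map onto its image. Let [x] be a connected component of Ψ⁻¹(w₀). Then there exists ε > 0 such that for all indices k, l with U_k ∩ [x] ≠ ∅ and U_l ∩ [x] ≠ ∅, one has Ψ(U_k) ∩ B(w₀,ε) = Ψ(U_l) ∩ B(w₀,ε). -/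
/-!
If `Ψ|_U` is open onto its image and `O` is open, then near any point of `Ψ(O ∩ U)` the set
`Ψ(U)` is contained in `Ψ(O)`. Hence two cover members sharing a point of the level set have
the same image germ at `w₀`. Since the component `[x]` is connected and covered by the open
sets `U i`, any two members meeting it are linked by a chain of members overlapping on `[x]`,
so all their image germs agree; with finitely many members one radius `ε` serves all pairs.
-/

open Set Metric

open Filter Topology

theorem IsPreconnected.reflTransGen_of_subset_iUnion {X ι : Type*} [TopologicalSpace X]
    {C : Set X} (hC : IsPreconnected C) {U : ι → Set X} (hU : ∀ i, IsOpen (U i))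
    (hCU : C ⊆ ⋃ i, U i) {k l : ι} (hk : (U k ∩ C).Nonempty) (hl : (U l ∩ C).Nonempty) :
    Relation.ReflTransGen (fun i j => (U i ∩ U j ∩ C).Nonempty) k l := by
  set S := {i | Relation.ReflTransGen (fun i j => (U i ∩ U j ∩ C).Nonempty) k i}
  by_contra hkl
  have hCAB : C ⊆ (⋃ i ∈ S, U i) ∪ ⋃ i ∈ Sᶜ, U i := by
    intro z hz
    obtain ⟨i, hi⟩ := mem_iUnion.mp (hCU hz)
    by_cases hiS : i ∈ S
    · exact Or.inl (mem_biUnion hiS hi)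
    · exact Or.inr (mem_biUnion hiS hi)
  obtain ⟨z, hzC, hzS, hzSc⟩ := hC _ _ (isOpen_biUnion fun i _ => hU i)
    (isOpen_biUnion fun i _ => hU i) hCAB
    (hk.mono fun z hz => ⟨hz.2, mem_biUnion Relation.ReflTransGen.refl hz.1⟩)
    (hl.mono fun z hz => ⟨hz.2, mem_biUnion hkl hz.1⟩)
  obtain ⟨i, hiS, hzi⟩ := mem_iUnion₂.mp hzS
  obtain ⟨j, hjS, hzj⟩ := mem_iUnion₂.mp hzSc
  exact hjS (hiS.tail ⟨z, ⟨hzi, hzj⟩, hzC⟩)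

theorem Metric.exists_inter_ball_eq_of_eventuallyEq {α ι : Type*} [PseudoMetricSpace α]
    [Finite ι] {x : α} {s : ι → Set α} (h : ∀ i j, s i =ᶠ[𝓝 x] s j) :
    ∃ ε > 0, ∀ i j, s i ∩ ball x ε = s j ∩ ball x ε := by
  have h' : ∀ᶠ y in 𝓝 x, ∀ i j, (y ∈ s i ↔ y ∈ s j) := by
    simp only [eventually_all]
    exact fun i j => eventuallyEq_set.mp (h i j)
  obtain ⟨ε, hε, hball⟩ := Metric.eventually_nhds_iff.mp h'
  refine ⟨ε, hε, fun i j => ?_⟩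
  ext y
  simp only [mem_inter_iff, mem_ball]
  exact and_congr_left fun hy => hball hy i j

section

variable {n : ℕ} {X : Type*} [TopologicalSpace X] {Ψ : X → EuclideanSpace ℝ (Fin n)}

theorem IsOpenOnto.image_eventuallyLE {U O : Set X} (hU : IsOpenOnto Ψ U) (hO : IsOpen O)
    {y : X} (hy : y ∈ O ∩ U) : Ψ '' U ≤ᶠ[𝓝 (Ψ y)] Ψ '' O := by
  obtain ⟨V, hV, hVU⟩ := hU O hO
  have hyV : Ψ y ∈ V := (hVU ▸ mem_image_of_mem Ψ hy).1
  filter_upwards [hV.mem_nhds hyV] with v hvV hvU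
  exact image_mono inter_subset_left (hVU ▸ ⟨hvV, hvU⟩ : v ∈ Ψ '' (O ∩ U))

theorem IsOpenOnto.image_eventuallyEq {U U' : Set X} (hU : IsOpenOnto Ψ U)
    (hU' : IsOpenOnto Ψ U') (hUo : IsOpen U) (hUo' : IsOpen U') {y : X} (hy : y ∈ U ∩ U') :
    Ψ '' U =ᶠ[𝓝 (Ψ y)] Ψ '' U' :=
  (hU.image_eventuallyLE hUo' ⟨hy.2, hy.1⟩).antisymm (hU'.image_eventuallyLE hUo hy)

end

theorem exists_eps_images_eq_general {n : ℕ} {X : Type*} [TopologicalSpace X]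
    {N : ℕ}
    (Ψ : X → EuclideanSpace ℝ (Fin n))
    (w₀ : EuclideanSpace ℝ (Fin n))
    (U : Fin N → Set X) (hUopen : ∀ i, IsOpen (U i)) (hcover : Ψ ⁻¹' {w₀} ⊆ ⋃ i, U i)
    (hUopenOnto : ∀ i, IsOpenOnto Ψ (U i))
    (x : X) :
    ∃ ε > (0:ℝ), ∀ k l : Fin N,
      (U k ∩ connectedComponentIn (Ψ ⁻¹' {w₀}) x).Nonempty →
      (U l ∩ connectedComponentIn (Ψ ⁻¹' {w₀}) x).Nonempty →
      Ψ '' U k ∩ Metric.ball w₀ ε = Ψ '' U l ∩ Metric.ball w₀ ε := by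
  set C := connectedComponentIn (Ψ ⁻¹' {w₀}) x
  have hCw₀ : C ⊆ Ψ ⁻¹' {w₀} := connectedComponentIn_subset _ _
  have hadj : ∀ i j, (U i ∩ U j ∩ C).Nonempty → Ψ '' U i =ᶠ[𝓝 w₀] Ψ '' U j := by
    rintro i j ⟨y, hy, hyC⟩
    rw [← show Ψ y = w₀ from hCw₀ hyC]
    exact (hUopenOnto i).image_eventuallyEq (hUopenOnto j) (hUopen i) (hUopen j) hy
  have hchain : ∀ {k l}, Relation.ReflTransGen (fun i j => (U i ∩ U j ∩ C).Nonempty) k l →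
      Ψ '' U k =ᶠ[𝓝 w₀] Ψ '' U l := by
    intro k l h
    induction h with
    | refl => rfl
    | tail _ hij ih => exact ih.trans (hadj _ _ hij)
  have hlinked : ∀ k l : {k // (U k ∩ C).Nonempty}, Ψ '' U k =ᶠ[𝓝 w₀] Ψ '' U l :=
    fun k l => hchain <| isPreconnected_connectedComponentIn.reflTransGen_of_subset_iUnion
      hUopen (hCw₀.trans hcover) k.2 l.2
  obtain ⟨ε, hε, hball⟩ := Metric.exists_inter_ball_eq_of_eventuallyEq hlinked
  exact ⟨ε, hε, fun k l hk hl => hball ⟨k, hk⟩ ⟨l, hl⟩⟩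

/-- For a finite open cover of a level set, with each restriction open onto its image:
near the level, the images of any two cover members meeting the component agree. -/
theorem exists_eps_images_eq {n : ℕ} {X : Type*} [TopologicalSpace X] [T2Space X]
    {N : ℕ}
    (Ψ : X → EuclideanSpace ℝ (Fin n)) (hcont : Continuous Ψ)
    (w₀ : EuclideanSpace ℝ (Fin n))
    (U : Fin N → Set X) (hUopen : ∀ i, IsOpen (U i)) (hcover : Ψ ⁻¹' {w₀} ⊆ ⋃ i, U i)
    (hUopenOnto : ∀ i, IsOpenOnto Ψ (U i))
    (x : X) (hx : x ∈ Ψ ⁻¹' {w₀}) :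
    ∃ ε > (0:ℝ), ∀ k l : Fin N,
      (U k ∩ connectedComponentIn (Ψ ⁻¹' {w₀}) x).Nonempty →
      (U l ∩ connectedComponentIn (Ψ ⁻¹' {w₀}) x).Nonempty →
      Ψ '' U k ∩ Metric.ball w₀ ε = Ψ '' U l ∩ Metric.ball w₀ ε :=
  exists_eps_images_eq_general Ψ w₀ U hUopen hcover hUopenOnto x
end

section
/- Let X be a Hausdorff topological space, Ψ : X → ℝⁿ a continuous map, w₀ ∈ ℝⁿ, and {U_i}_{i=1}^N a finite collection of open subsets of X whose union contains Ψ⁻¹(w₀), such that for each i the restriction Ψ|_{U_i} : U_i → Ψ(U_i) is an open map onto its image. Let [x] be a connected component of Ψ⁻¹(w₀), and let ε > 0 be such that Ψ(U_k) ∩ B(w₀,ε) = Ψ(U_l) ∩ B(w₀,ε) whenever U_k ∩ [x] ≠ ∅ and U_l ∩ [x] ≠ ∅, and Ψ(U_i) ∩ B(w₀,ε) = Ψ(U_i ∩ U_j) ∩ B(w₀,ε) whenever U_i ∩ U_j ∩ [x] ≠ ∅. Set Ũ_{[x],ε} = ⋃_{i : U_i ∩ [x] ≠ ∅} (U_i ∩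 Ψ⁻¹(B(w₀,ε))). If for each i every level set of Ψ|_{U_i} : U_i → Ψ(U_i) is path connected, then every level set of the restriction of Ψ to Ũ_{[x],ε} is path connected: for every w and every x₀, x₁ ∈ Ũ_{[x],ε} with Ψ(x₀) = Ψ(x₁) = w, the points x₀ and x₁ are connected by a continuous path in Ũ_{[x],ε} ∩ Ψ⁻¹(w). -/
open Set Metric

/-- The set Ũ_{[x],ε}: the union, over the cover members meeting the component C, of
their intersections with the preimage of the ε-ball around w₀. -/
def tildeU {n : ℕ} {X : Type*} [TopologicalSpace X] {N : ℕ}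
    (Ψ : X → EuclideanSpace ℝ (Fin n)) (U : Fin N → Set X)
    (w₀ : EuclideanSpace ℝ (Fin n)) (ε : ℝ) (C : Set X) : Set X :=
  ⋃ i ∈ {i : Fin N | (U i ∩ C).Nonempty}, U i ∩ Ψ ⁻¹' (Metric.ball w₀ ε)

/-- If the level sets of each restriction Ψ|_{U i} are path connected, then the level sets
of the restriction of Ψ to Ũ_{[x],ε} are path connected. -/
theorem levelSets_pathConnected_on_tildeU {n : ℕ} {X : Type*} [TopologicalSpace X]
    [T2Space X] {N : ℕ}
    (Ψ : X → EuclideanSpace ℝ (Fin n)) (hcont : Continuous Ψ)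
    (w₀ : EuclideanSpace ℝ (Fin n))
    (U : Fin N → Set X) (hUopen : ∀ i, IsOpen (U i)) (hcover : Ψ ⁻¹' {w₀} ⊆ ⋃ i, U i)
    (hUopenOnto : ∀ i, IsOpenOnto Ψ (U i))
    (x : X) (hx : x ∈ Ψ ⁻¹' {w₀}) (ε : ℝ) (hε : 0 < ε)
    (heps₁ : ∀ i j : Fin N,
      (U i ∩ U j ∩ connectedComponentIn (Ψ ⁻¹' {w₀}) x).Nonempty →
      Ψ '' U i ∩ Metric.ball w₀ ε = Ψ '' (U i ∩ U j) ∩ Metric.ball w₀ ε)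
    (heps₂ : ∀ k l : Fin N,
      (U k ∩ connectedComponentIn (Ψ ⁻¹' {w₀}) x).Nonempty →
      (U l ∩ connectedComponentIn (Ψ ⁻¹' {w₀}) x).Nonempty →
      Ψ '' U k ∩ Metric.ball w₀ ε = Ψ '' U l ∩ Metric.ball w₀ ε)
    (hfib : ∀ i : Fin N, ∀ w : EuclideanSpace ℝ (Fin n),
      ∀ x₀ ∈ U i ∩ Ψ ⁻¹' {w}, ∀ x₁ ∈ U i ∩ Ψ ⁻¹' {w},
        JoinedIn (U i ∩ Ψ ⁻¹' {w}) x₀ x₁) :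
    ∀ w : EuclideanSpace ℝ (Fin n),
      ∀ x₀ ∈ tildeU Ψ U w₀ ε (connectedComponentIn (Ψ ⁻¹' {w₀}) x) ∩ Ψ ⁻¹' {w},
      ∀ x₁ ∈ tildeU Ψ U w₀ ε (connectedComponentIn (Ψ ⁻¹' {w₀}) x) ∩ Ψ ⁻¹' {w},
        JoinedIn (tildeU Ψ U w₀ ε (connectedComponentIn (Ψ ⁻¹' {w₀}) x) ∩ Ψ ⁻¹' {w})
          x₀ x₁ := by
  classical
  intro w x₀ hx₀ x₁ hx₁
  set C := connectedComponentIn (Ψ ⁻¹' {w₀}) x with hC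
  set T := tildeU Ψ U w₀ ε C ∩ Ψ ⁻¹' {w} with hT
  obtain ⟨hx₀U, hx₀w⟩ := hx₀
  obtain ⟨hx₁U, hx₁w⟩ := hx₁
  simp only [tildeU, mem_iUnion, mem_setOf_eq, exists_prop] at hx₀U hx₁U
  obtain ⟨i₀, hi₀C, hx₀i, hx₀b⟩ := hx₀U
  obtain ⟨i₁, hi₁C, hx₁i, hx₁b⟩ := hx₁U
  have hx₀w' : Ψ x₀ = w := hx₀w
  have hx₁w' : Ψ x₁ = w := hx₁w
  have hwball : w ∈ Metric.ball w₀ ε := hx₀w' ▸ hx₀b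
  -- fibers of members meeting C are inside T
  have hsubT : ∀ i : Fin N, (U i ∩ C).Nonempty → U i ∩ Ψ ⁻¹' {w} ⊆ T := by
    intro i hi y hy
    refine ⟨?_, hy.2⟩
    simp only [tildeU, mem_iUnion, mem_setOf_eq, exists_prop]
    have hyw : Ψ y = w := hy.2
    exact ⟨i, hi, hy.1, by simp only [mem_preimage, hyw]; exact hwball⟩
  -- w is in the image of each member meeting C
  have hwim : ∀ i : Fin N, (U i ∩ C).Nonempty → w ∈ Ψ '' U i := by
    intro i hi
    have h := heps₂ i i₀ hi hi₀C
    have : w ∈ Ψ '' U i ∩ Metric.ball w₀ ε := by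
      rw [h]; exact ⟨⟨x₀, hx₀i, hx₀w'⟩, hwball⟩
    exact this.1
  set Good : Fin N → Prop := fun i => ∃ y, y ∈ U i ∩ Ψ ⁻¹' {w} ∧ JoinedIn T x₀ y
    with hGood
  have hx₀T : x₀ ∈ T := by
    refine ⟨?_, hx₀w⟩
    simp only [tildeU, mem_iUnion, mem_setOf_eq, exists_prop]
    exact ⟨i₀, hi₀C, hx₀i, hx₀b⟩
  have hGi₀ : Good i₀ := ⟨x₀, ⟨hx₀i, hx₀w⟩, JoinedIn.refl hx₀T⟩
  -- the propagation step
  have hstep : ∀ i j : Fin N, (U i ∩ C).Nonempty → (U j ∩ C).Nonempty →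
      (U i ∩ U j ∩ C).Nonempty → Good i → Good j := by
    intro i j hiC hjC hijC ⟨y, hy, hjy⟩
    have h := heps₁ i j hijC
    have hwij : w ∈ Ψ '' (U i ∩ U j) ∩ Metric.ball w₀ ε := by
      rw [← h]; exact ⟨hwim i hiC, hwball⟩
    obtain ⟨z, hz, hΨz⟩ := hwij.1
    have hjyz : JoinedIn T y z :=
      (hfib i w y hy z ⟨hz.1, hΨz⟩).mono (hsubT i hiC)
    exact ⟨z, ⟨hz.2, hΨz⟩, hjy.trans hjyz⟩
  -- the "good" index set covers all indices meeting C, by connectedness of C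
  have hallGood : ∀ j : Fin N, (U j ∩ C).Nonempty → Good j := by
    intro j hjC
    by_contra hbad
    set u : Set X := ⋃ i ∈ {i : Fin N | (U i ∩ C).Nonempty ∧ Good i}, U i with hu
    set v : Set X := ⋃ i ∈ {i : Fin N | (U i ∩ C).Nonempty ∧ ¬ Good i}, U i with hv
    have hpre : IsPreconnected C := isPreconnected_connectedComponentIn
    have huo : IsOpen u := isOpen_biUnion fun i _ => hUopen i
    have hvo : IsOpen v := isOpen_biUnion fun i _ => hUopen i
    have hCuv : C ⊆ u ∪ v := by
      intro c hc
      have hc' : c ∈ Ψ ⁻¹' {w₀} := connectedComponentIn_subset _ _ hc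
      obtain ⟨i, hci⟩ := mem_iUnion.1 (hcover hc')
      have hiC : (U i ∩ C).Nonempty := ⟨c, hci, hc⟩
      by_cases hg : Good i
      · exact Or.inl (mem_biUnion ⟨hiC, hg⟩ hci)
      · exact Or.inr (mem_biUnion ⟨hiC, hg⟩ hci)
    have hCu : (C ∩ u).Nonempty := by
      obtain ⟨c, hc⟩ := id hi₀C
      exact ⟨c, hc.2, mem_biUnion ⟨hi₀C, hGi₀⟩ hc.1⟩
    have hCv : (C ∩ v).Nonempty := by
      obtain ⟨c, hc⟩ := id hjC
      exact ⟨c, hc.2, mem_biUnion ⟨hjC, hbad⟩ hc.1⟩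
    obtain ⟨c, hcC, hcu, hcv⟩ := hpre u v huo hvo hCuv hCu hCv
    simp only [hu, hv, mem_iUnion, mem_setOf_eq, exists_prop] at hcu hcv
    obtain ⟨i, ⟨hiC, hig⟩, hci⟩ := hcu
    obtain ⟨i', ⟨hi'C, hi'g⟩, hci'⟩ := hcv
    exact hi'g (hstep i i' hiC hi'C ⟨c, ⟨hci, hci'⟩, hcC⟩ hig)
  -- conclude
  obtain ⟨y, hy, hjy⟩ := hallGood i₁ hi₁C
  have : JoinedIn T y x₁ :=
    (hfib i₁ w y hy x₁ ⟨hx₁i, hx₁w⟩).mono (hsubT i₁ hi₁C)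
  exact hjy.trans this
end

section
/- Let X be a Hausdorff topological space, Ψ : X → ℝⁿ a continuous map, w₀ ∈ ℝⁿ, and {U_i}_{i=1}^N a finite collection of open subsets of X whose union contains Ψ⁻¹(w₀), such that for each i the restriction Ψ|_{U_i} : U_i → Ψ(U_i) is a convex map and an open map onto its image. Let [x] be a connected component of Ψ⁻¹(w₀), and let ε > 0 be such that Ψ(U_k) ∩ B(w₀,ε) = Ψ(U_l) ∩ B(w₀,ε) whenever U_k ∩ [x] ≠ ∅ and U_l ∩ [x] ≠ ∅, and Ψ(U_i) ∩ B(w₀,ε) = Ψ(U_i ∩ U_j) ∩ B(w₀,ε) whenever U_i ∩ U_j ∩ [x] ≠ ∅. Set Ũ_{[x],ε} = ⋃_{i : U_i ∩ [x] ≠ ∅} (U_i ∩ Ψ⁻¹(B(w₀,ε))). Then the restriction Ψ|_{Ũ_{[x],ε}} : Ũ_{[x],ε} → Ψ(Ũ_{[x],ε}) is a convex map and is an open map onto its image. -/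
open Set Metric

/-!
Write `B` for the ball `ball w₀ ε`. To join `x₀ ∈ U i` to `x₁ ∈ U j` inside `Ũ`, lift `Ψ x₁` to
a point `y ∈ U i`, possible because all charts meeting `[x]` have the same image in `B`. A convex
path of `U i` from `x₀` to `y` has a segment as `Ψ`-image, so it stays over the convex set `B`.
It remains to join `y` to `x₁` inside the fibre of `Ψ x₁`: inside one chart, a convex path
between two points with the same value is `Ψ`-constant, and the charts meeting `[x]` are linked
by overlaps meeting `[x]`, in which that fibre is nonempty by the choice of `ε`. A monotone
straight path followed by a `Ψ`-constant one is again monotone straight.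

Openness is chartwise: `Ψ '' (O ∩ Ũ)` is the union of the relatively open sets
`Ψ '' (O ∩ Ψ ⁻¹' B ∩ U i)`, and all these charts have the same image in `B`.
-/

namespace MonotoneStraight

variable {n : ℕ} {c c' : ℝ → EuclideanSpace ℝ (Fin n)}

theorem image_subset_segment (h : MonotoneStraight c) :
    c '' Icc 0 1 ⊆ segment ℝ (c 0) (c 1) := by
  rcases h with hconst | ⟨him, -⟩
  · rintro _ ⟨t, ht, rfl⟩
    rw [hconst t ht]
    exact left_mem_segment ℝ _ _
  · exact him.le

theorem const_of_apply_one_eq (h : MonotoneStraight c) (he : c 1 = c 0) :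
    ∀ t ∈ Icc (0 : ℝ) 1, c t = c 0 := fun t ht => by
  simpa [he] using h.image_subset_segment (mem_image_of_mem c ht)

theorem mem_of_convex (h : MonotoneStraight c) {K : Set (EuclideanSpace ℝ (Fin n))}
    (hK : Convex ℝ K) (h₀ : c 0 ∈ K) (h₁ : c 1 ∈ K) : ∀ t ∈ Icc (0 : ℝ) 1, c t ∈ K :=
  fun _ ht => hK.segment_subset h₀ h₁ (h.image_subset_segment (mem_image_of_mem c ht))

theorem of_eqOn_half (h : MonotoneStraight c)
    (h₁ : ∀ t ∈ Icc (0 : ℝ) (1 / 2), c' t = c (2 * t))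
    (h₂ : ∀ t ∈ Icc (1 / 2 : ℝ) 1, c' t = c 1) : MonotoneStraight c' := by
  have hc'₀ : c' 0 = c 0 := by simpa using h₁ 0 (by norm_num)
  have hc'₁ : c' 1 = c 1 := h₂ 1 (by norm_num)
  have himage : c' '' Icc 0 1 = c '' Icc 0 1 := by
    apply Subset.antisymm
    · rintro _ ⟨t, ht, rfl⟩
      rcases le_total t (1 / 2) with hle | hge
      · rw [h₁ t ⟨ht.1, hle⟩]
        exact mem_image_of_mem c ⟨by linarith [ht.1], by linarith⟩
      · rw [h₂ t ⟨hge, ht.2⟩]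
        exact mem_image_of_mem c (right_mem_Icc.mpr zero_le_one)
    · rintro _ ⟨s, hs, rfl⟩
      refine ⟨s / 2, ⟨by linarith [hs.1], by linarith [hs.2]⟩, ?_⟩
      rw [h₁ (s / 2) ⟨by linarith [hs.1], by linarith [hs.2]⟩, mul_div_cancel₀ s two_ne_zero]
  rcases h with hconst | ⟨him, hmono⟩
  · left
    intro t ht
    obtain ⟨s, hs, hst⟩ := himage.le (mem_image_of_mem c' ht)
    rw [← hst, hc'₀, hconst s hs]
  · refine Or.inr ⟨by rw [himage, him, hc'₀, hc'₁], fun t₁ t₂ t₃ h0 h12 h23 h31 => ?_⟩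
    by_cases h2 : t₂ < 1 / 2
    · rw [h₁ t₁ ⟨h0, by linarith⟩, h₁ t₂ ⟨by linarith, h2.le⟩]
      by_cases h3 : t₃ ≤ 1 / 2
      · rw [h₁ t₃ ⟨by linarith, h3⟩]
        exact hmono _ _ _ (by linarith) (by linarith) (by linarith) (by linarith)
      · rw [h₂ t₃ ⟨by linarith, h31⟩]
        exact hmono _ _ 1 (by linarith) (by linarith) (by linarith) le_rfl
    · rw [h₂ t₂ ⟨by linarith, by linarith⟩, h₂ t₃ ⟨by linarith, h31⟩]
      exact right_mem_segment ℝ _ _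

end MonotoneStraight

theorem Path.extend_ofLine {X : Type*} [TopologicalSpace X] {x y : X} {f : ℝ → X}
    (hf : ContinuousOn f unitInterval) (h₀ : f 0 = x) (h₁ : f 1 = y) {t : ℝ}
    (ht : t ∈ unitInterval) : (Path.ofLine hf h₀ h₁).extend t = f t := by
  rw [Path.extend_apply _ ht]
  rfl

section StraightJoinedIn

variable {n : ℕ} {X : Type*} [TopologicalSpace X] {Ψ : X → EuclideanSpace ℝ (Fin n)}
  {S : Set X} {x₀ x₁ y : X}

def StraightJoinedIn (Ψ : X → EuclideanSpace ℝ (Fin n)) (S : Set X) (x₀ x₁ : X) : Prop :=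
  ∃ γ : ℝ → X, ContinuousOn γ (Icc 0 1) ∧ (∀ t ∈ Icc (0 : ℝ) 1, γ t ∈ S) ∧
    γ 0 = x₀ ∧ γ 1 = x₁ ∧ MonotoneStraight (Ψ ∘ γ)

theorem IsConvexMapOn.straightJoinedIn (h : IsConvexMapOn Ψ S) (hx₀ : x₀ ∈ S) (hx₁ : x₁ ∈ S) :
    StraightJoinedIn Ψ S x₀ x₁ :=
  h x₀ hx₀ x₁ hx₁

theorem StraightJoinedIn.joinedIn_fiber (h : StraightJoinedIn Ψ S x₀ x₁)
    (hΨ : Ψ x₀ = Ψ x₁) : JoinedIn (S ∩ Ψ ⁻¹' {Ψ x₀}) x₀ x₁ := by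
  obtain ⟨γ, hγc, hγS, rfl, rfl, hms⟩ := h
  refine JoinedIn.ofLine hγc rfl rfl ?_
  rintro _ ⟨t, ht, rfl⟩
  exact ⟨hγS t ht, hms.const_of_apply_one_eq hΨ.symm t ht⟩

theorem StraightJoinedIn.inter_preimage_convex (h : StraightJoinedIn Ψ S x₀ x₁)
    {K : Set (EuclideanSpace ℝ (Fin n))} (hK : Convex ℝ K) (h₀ : Ψ x₀ ∈ K) (h₁ : Ψ x₁ ∈ K) :
    StraightJoinedIn Ψ (S ∩ Ψ ⁻¹' K) x₀ x₁ := by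
  obtain ⟨γ, hγc, hγS, rfl, rfl, hms⟩ := h
  exact ⟨γ, hγc, fun t ht => ⟨hγS t ht, hms.mem_of_convex hK h₀ h₁ t ht⟩, rfl, rfl, hms⟩

theorem StraightJoinedIn.mono (h : StraightJoinedIn Ψ S x₀ x₁) {T : Set X} (hST : S ⊆ T) :
    StraightJoinedIn Ψ T x₀ x₁ :=
  let ⟨γ, hγc, hγS, h₀, h₁, hms⟩ := h
  ⟨γ, hγc, fun t ht => hST (hγS t ht), h₀, h₁, hms⟩

theorem StraightJoinedIn.trans_joinedIn_fiber (h : StraightJoinedIn Ψ S x₀ y)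
    (h' : JoinedIn (S ∩ Ψ ⁻¹' {Ψ y}) y x₁) : StraightJoinedIn Ψ S x₀ x₁ := by
  obtain ⟨γ, hγc, hγS, rfl, rfl, hms⟩ := h
  obtain ⟨δ, hδ⟩ := h'
  set P := (Path.ofLine hγc rfl rfl).trans δ
  have hfirst : ∀ t ∈ Icc (0 : ℝ) (1 / 2), P.extend t = γ (2 * t) := fun t ht => by
    rw [Path.extend_trans_of_le_half _ _ ht.2,
      Path.extend_ofLine _ _ _ ⟨by linarith [ht.1], by linarith [ht.2]⟩]
  have hsecond : ∀ t ∈ Icc (1 / 2 : ℝ) 1, P.extend t ∈ S ∩ Ψ ⁻¹' {Ψ (γ 1)} := fun t ht => by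
    rw [Path.extend_trans_of_half_le _ _ ht.1]
    obtain ⟨s, hs⟩ := δ.extend_range ▸ mem_range_self (f := δ.extend) (2 * t - 1)
    exact hs ▸ hδ s
  refine ⟨P.extend, P.continuous_extend.continuousOn, fun t ht => ?_, P.extend_zero,
    P.extend_one, hms.of_eqOn_half (fun t ht => congrArg Ψ (hfirst t ht))
      fun t ht => (hsecond t ht).2⟩
  rcases le_total t (1 / 2) with hle | hge
  · rw [hfirst t ⟨ht.1, hle⟩]
    exact hγS _ ⟨by linarith [ht.1], by linarith⟩
  · exact (hsecond t ⟨hge, ht.2⟩).1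

end StraightJoinedIn

theorem IsPreconnected.mem_of_chain_closed {X ι : Type*} [TopologicalSpace X] {C : Set X}
    (hC : IsPreconnected C) {U : ι → Set X} (hU : ∀ i, IsOpen (U i)) (hcover : C ⊆ ⋃ i, U i)
    {T : Set ι} (hT : ∀ k ∈ T, ∀ l, (U k ∩ U l ∩ C).Nonempty → l ∈ T) {i j : ι} (hi : i ∈ T)
    (hiC : (U i ∩ C).Nonempty) (hjC : (U j ∩ C).Nonempty) : j ∈ T := by
  by_contra hj
  have hcoverT : C ⊆ (⋃ k ∈ T, U k) ∪ ⋃ k ∈ Tᶜ, U k := by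
    intro c hc
    obtain ⟨k, hck⟩ := mem_iUnion.mp (hcover hc)
    by_cases hk : k ∈ T
    exacts [Or.inl (mem_biUnion hk hck), Or.inr (mem_biUnion hk hck)]
  obtain ⟨c, hcC, hcT, hcTc⟩ := hC _ _ (isOpen_biUnion fun k _ => hU k)
    (isOpen_biUnion fun k _ => hU k) hcoverT
    (hiC.mono fun c hc => ⟨hc.2, mem_biUnion hi hc.1⟩)
    (hjC.mono fun c hc => ⟨hc.2, mem_biUnion hj hc.1⟩)
  obtain ⟨k, hk, hck⟩ := mem_iUnion₂.mp hcT
  obtain ⟨l, hl, hcl⟩ := mem_iUnion₂.mp hcTc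
  exact hl (hT k hk l ⟨c, ⟨hck, hcl⟩, hcC⟩)

section tildeU

variable {n : ℕ} {X : Type*} [TopologicalSpace X] {N : ℕ} {Ψ : X → EuclideanSpace ℝ (Fin n)}
  {U : Fin N → Set X} {w₀ : EuclideanSpace ℝ (Fin n)} {ε : ℝ} {C : Set X}

theorem mem_tildeU {z : X} :
    z ∈ tildeU Ψ U w₀ ε C ↔ ∃ i, (U i ∩ C).Nonempty ∧ z ∈ U i ∧ Ψ z ∈ ball w₀ ε := by
  simp only [tildeU, mem_iUnion₂, mem_ofPred_eq, mem_inter_iff, mem_preimage, exists_prop]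

theorem joinedIn_tildeU_fiber_of_mem_chart {k : Fin N} (hconv : IsConvexMapOn Ψ (U k))
    (hk : (U k ∩ C).Nonempty) {a b : X} {w : EuclideanSpace ℝ (Fin n)} (ha : a ∈ U k)
    (hb : b ∈ U k) (hwa : Ψ a = w) (hwb : Ψ b = w) (hw : w ∈ ball w₀ ε) :
    JoinedIn (tildeU Ψ U w₀ ε C ∩ Ψ ⁻¹' {w}) a b := by
  subst hwa
  exact ((hconv.straightJoinedIn ha hb).joinedIn_fiber hwb.symm).mono
    fun z hz => ⟨mem_tildeU.mpr ⟨k, hk, hz.1, (hz.2 : Ψ z = Ψ a) ▸ hw⟩, hz.2⟩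

/-- Walk from chart to chart along `C`, changing charts at points of overlaps above `C`. -/
theorem joinedIn_tildeU_fiber (hC : IsPreconnected C) (hUopen : ∀ i, IsOpen (U i))
    (hcover : C ⊆ ⋃ i, U i) (hUconv : ∀ i, IsConvexMapOn Ψ (U i))
    (hoverlap : ∀ i j, (U i ∩ U j ∩ C).Nonempty → Ψ '' U i ∩ ball w₀ ε ⊆ Ψ '' (U i ∩ U j))
    {i j : Fin N} (hi : (U i ∩ C).Nonempty) (hj : (U j ∩ C).Nonempty) {y z : X}
    (hy : y ∈ U i) (hz : z ∈ U j) (hyz : Ψ y = Ψ z) (hball : Ψ y ∈ ball w₀ ε) :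
    JoinedIn (tildeU Ψ U w₀ ε C ∩ Ψ ⁻¹' {Ψ y}) y z := by
  set F := tildeU Ψ U w₀ ε C ∩ Ψ ⁻¹' {Ψ y}
  let T : Set (Fin N) := {k | ∃ z ∈ U k, Ψ z = Ψ y ∧ JoinedIn F y z}
  have hiT : i ∈ T := ⟨y, hy, rfl, JoinedIn.refl ⟨mem_tildeU.mpr ⟨i, hi, hy, hball⟩, rfl⟩⟩
  have hT : ∀ k ∈ T, ∀ l, (U k ∩ U l ∩ C).Nonempty → l ∈ T := by
    rintro k ⟨z, hzk, hzy, hyz⟩ l hkl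
    obtain ⟨z', ⟨hz'k, hz'l⟩, hz'z⟩ := hoverlap k l hkl ⟨⟨z, hzk, rfl⟩, hzy ▸ hball⟩
    have hzz' : JoinedIn F z z' := joinedIn_tildeU_fiber_of_mem_chart (hUconv k)
      (hkl.mono fun _ h => ⟨h.1.1, h.2⟩) hzk hz'k hzy (hz'z.trans hzy) hball
    exact ⟨z', hz'l, hz'z.trans hzy, hyz.trans hzz'⟩
  obtain ⟨z', hz'j, hz'y, hyz'⟩ := hC.mem_of_chain_closed hUopen hcover hT hiT hi hj
  exact hyz'.trans
    (joinedIn_tildeU_fiber_of_mem_chart (hUconv j) hj hz'j hz hz'y hyz.symm hball)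

theorem isConvexMapOn_tildeU (hC : IsPreconnected C) (hUopen : ∀ i, IsOpen (U i))
    (hcover : C ⊆ ⋃ i, U i) (hUconv : ∀ i, IsConvexMapOn Ψ (U i))
    (hoverlap : ∀ i j, (U i ∩ U j ∩ C).Nonempty → Ψ '' U i ∩ ball w₀ ε ⊆ Ψ '' (U i ∩ U j))
    (himage : ∀ k l, (U k ∩ C).Nonempty → (U l ∩ C).Nonempty →
      Ψ '' U k ∩ ball w₀ ε ⊆ Ψ '' U l) :
    IsConvexMapOn Ψ (tildeU Ψ U w₀ ε C) := by
  intro x₀ hx₀ x₁ hx₁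
  obtain ⟨i, hi, hx₀i, hx₀ball⟩ := mem_tildeU.mp hx₀
  obtain ⟨j, hj, hx₁j, hx₁ball⟩ := mem_tildeU.mp hx₁
  obtain ⟨y, hyi, hyx₁⟩ := himage j i hj hi ⟨mem_image_of_mem Ψ hx₁j, hx₁ball⟩
  have hx₀y : StraightJoinedIn Ψ (tildeU Ψ U w₀ ε C) x₀ y :=
    (((hUconv i).straightJoinedIn hx₀i hyi).inter_preimage_convex (convex_ball w₀ ε) hx₀ball
      (hyx₁ ▸ hx₁ball)).mono fun z hz => mem_tildeU.mpr ⟨i, hi, hz.1, hz.2⟩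
  exact hx₀y.trans_joinedIn_fiber (joinedIn_tildeU_fiber hC hUopen hcover hUconv hoverlap
    hi hj hyi hx₁j hyx₁ (hyx₁ ▸ hx₁ball))

theorem isOpenOnto_tildeU (hcont : Continuous Ψ) (hUopenOnto : ∀ i, IsOpenOnto Ψ (U i))
    (himage : ∀ k l, (U k ∩ C).Nonempty → (U l ∩ C).Nonempty →
      Ψ '' U k ∩ ball w₀ ε ⊆ Ψ '' U l) :
    IsOpenOnto Ψ (tildeU Ψ U w₀ ε C) := by
  intro O hO
  choose V hVopen hV using fun i => hUopenOnto i _ (hO.inter (isOpen_ball.preimage hcont))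
  refine ⟨⋃ i ∈ {i | (U i ∩ C).Nonempty}, V i ∩ ball w₀ ε,
    isOpen_biUnion fun i _ => (hVopen i).inter isOpen_ball, Subset.antisymm ?_ ?_⟩
  · rintro _ ⟨z, ⟨hzO, hz⟩, rfl⟩
    obtain ⟨i, hi, hzi, hzball⟩ := mem_tildeU.mp hz
    have hzV : Ψ z ∈ V i ∩ Ψ '' U i := hV i ▸ mem_image_of_mem Ψ ⟨⟨hzO, hzball⟩, hzi⟩
    exact ⟨mem_biUnion hi ⟨hzV.1, hzball⟩, mem_image_of_mem Ψ hz⟩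
  · rintro _ ⟨hvV, z', hz', rfl⟩
    obtain ⟨i, hi, hz'V, -⟩ := mem_iUnion₂.mp hvV
    obtain ⟨j, hj, hz'j, hz'ball⟩ := mem_tildeU.mp hz'
    have hz'i : Ψ z' ∈ V i ∩ Ψ '' U i :=
      ⟨hz'V, himage j i hj hi ⟨mem_image_of_mem Ψ hz'j, hz'ball⟩⟩
    obtain ⟨z, ⟨⟨hzO, hzball⟩, hzi⟩, hzz'⟩ := (hV i).symm ▸ hz'i
    exact ⟨z, ⟨hzO, mem_tildeU.mpr ⟨i, hi, hzi, hzball⟩⟩, hzz'⟩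

end tildeU

theorem convex_open_on_tildeU_general {n : ℕ} {X : Type*} [TopologicalSpace X] {N : ℕ}
    (Ψ : X → EuclideanSpace ℝ (Fin n)) (hcont : Continuous Ψ)
    (w₀ : EuclideanSpace ℝ (Fin n))
    (U : Fin N → Set X) (hUopen : ∀ i, IsOpen (U i)) (hcover : Ψ ⁻¹' {w₀} ⊆ ⋃ i, U i)
    (hUconv : ∀ i, IsConvexMapOn Ψ (U i))
    (hUopenOnto : ∀ i, IsOpenOnto Ψ (U i))
    (x : X) (ε : ℝ)
    (heps₁ : ∀ i j : Fin N,
      (U i ∩ U j ∩ connectedComponentIn (Ψ ⁻¹' {w₀}) x).Nonempty →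
      Ψ '' U i ∩ Metric.ball w₀ ε = Ψ '' (U i ∩ U j) ∩ Metric.ball w₀ ε)
    (heps₂ : ∀ k l : Fin N,
      (U k ∩ connectedComponentIn (Ψ ⁻¹' {w₀}) x).Nonempty →
      (U l ∩ connectedComponentIn (Ψ ⁻¹' {w₀}) x).Nonempty →
      Ψ '' U k ∩ Metric.ball w₀ ε = Ψ '' U l ∩ Metric.ball w₀ ε) :
    IsConvexMapOn Ψ (tildeU Ψ U w₀ ε (connectedComponentIn (Ψ ⁻¹' {w₀}) x)) ∧
    IsOpenOnto Ψ (tildeU Ψ U w₀ ε (connectedComponentIn (Ψ ⁻¹' {w₀}) x)) := by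
  have himage : ∀ k l, (U k ∩ connectedComponentIn (Ψ ⁻¹' {w₀}) x).Nonempty →
      (U l ∩ connectedComponentIn (Ψ ⁻¹' {w₀}) x).Nonempty →
      Ψ '' U k ∩ ball w₀ ε ⊆ Ψ '' U l := fun k l hk hl =>
    (heps₂ k l hk hl).le.trans inter_subset_left
  exact ⟨isConvexMapOn_tildeU isPreconnected_connectedComponentIn hUopen
    ((connectedComponentIn_subset _ _).trans hcover) hUconv
    (fun i j hij => (heps₁ i j hij).le.trans inter_subset_left) himage,
    isOpenOnto_tildeU hcont hUopenOnto himage⟩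

/-- If each restriction Ψ|_{U i} is a convex map and open onto its image, then the
restriction of Ψ to Ũ_{[x],ε} is a convex map and open onto its image. -/
theorem convex_open_on_tildeU {n : ℕ} {X : Type*} [TopologicalSpace X]
    [T2Space X] {N : ℕ}
    (Ψ : X → EuclideanSpace ℝ (Fin n)) (hcont : Continuous Ψ)
    (w₀ : EuclideanSpace ℝ (Fin n))
    (U : Fin N → Set X) (hUopen : ∀ i, IsOpen (U i)) (hcover : Ψ ⁻¹' {w₀} ⊆ ⋃ i, U i)
    (hUconv : ∀ i, IsConvexMapOn Ψ (U i))
    (hUopenOnto : ∀ i, IsOpenOnto Ψ (U i))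
    (x : X) (hx : x ∈ Ψ ⁻¹' {w₀}) (ε : ℝ) (hε : 0 < ε)
    (heps₁ : ∀ i j : Fin N,
      (U i ∩ U j ∩ connectedComponentIn (Ψ ⁻¹' {w₀}) x).Nonempty →
      Ψ '' U i ∩ Metric.ball w₀ ε = Ψ '' (U i ∩ U j) ∩ Metric.ball w₀ ε)
    (heps₂ : ∀ k l : Fin N,
      (U k ∩ connectedComponentIn (Ψ ⁻¹' {w₀}) x).Nonempty →
      (U l ∩ connectedComponentIn (Ψ ⁻¹' {w₀}) x).Nonempty →
      Ψ '' U k ∩ Metric.ball w₀ ε = Ψ '' U l ∩ Metric.ball w₀ ε) :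
    IsConvexMapOn Ψ (tildeU Ψ U w₀ ε (connectedComponentIn (Ψ ⁻¹' {w₀}) x)) ∧
    IsOpenOnto Ψ (tildeU Ψ U w₀ ε (connectedComponentIn (Ψ ⁻¹' {w₀}) x)) :=
  convex_open_on_tildeU_general Ψ hcont w₀ U hUopen hcover hUconv hUopenOnto x ε heps₁ heps₂
end
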